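/- arXiv:1705.01600 — 6 statements merged into one kernel-verified Lean document; each statement's English description precedes it below -/
import Mathlib

section
/- Suppose there are constants C_α > 0 and α > 0 such that for every i ≥ 0 and every real x ≥ 1 one has, almost surely, P(X_{i+1} > x | 𝓕_i) ≤ C_α x^{-α}. Then for every γ with 0 < γ < α, every ε > 0 and every k ≥ 1, E[ (ε^k Π_k)^γ ] ≤ ( ε (1 + γ C_α/(α−γ))^{1/γ} )^{kγ}. -/
/-!
Replacing each factor `X j` by `max (X j) 1` only increases the product. A nonnegative
`ℱ i`-measurable weight `Y` can be pulled out of the conditional expectation, so the tail bound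
for `X (i + 1)` also holds under the measure `Y • μ`; the layer-cake formula for
`(max (X (i + 1)) 1) ^ γ` under that measure, split at level `1`, then gives
`E[Y (max (X (i + 1)) 1) ^ γ] ≤ (1 + γ C / (α - γ)) E[Y]`. Iterating this over the `k` factors
bounds `E[∏ (max (X j) 1) ^ γ]` by `(1 + γ C / (α - γ)) ^ k`.
-/

open MeasureTheory Set

section

variable {Ω : Type*}

lemma lintegral_Ioc_zero_one_rpow {p : ℝ} (hp : -1 < p) :
    ∫⁻ t in Ioc (0 : ℝ) 1, ENNReal.ofReal (t ^ p) = ENNReal.ofReal (1 / (p + 1)) := by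
  rw [← ofReal_integral_eq_lintegral_ofReal (intervalIntegral.intervalIntegrable_rpow' hp).1
      ((ae_restrict_mem measurableSet_Ioc).mono fun t ht => Real.rpow_nonneg ht.1.le p),
    ← intervalIntegral.integral_of_le zero_le_one, integral_rpow (Or.inl hp)]
  simp [Real.zero_rpow (by linarith : p + 1 ≠ 0)]

lemma lintegral_Ioi_one_rpow {p : ℝ} (hp : p < -1) :
    ∫⁻ t in Ioi (1 : ℝ), ENNReal.ofReal (t ^ p) = ENNReal.ofReal (-1 / (p + 1)) := by
  rw [← ofReal_integral_eq_lintegral_ofReal (integrableOn_Ioi_rpow_of_lt hp zero_lt_one)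
      ((ae_restrict_mem measurableSet_Ioi).mono fun t ht =>
        Real.rpow_nonneg (zero_le_one.trans ht.le) p),
    integral_Ioi_rpow_of_lt hp zero_lt_one, Real.one_rpow, neg_div]

theorem lintegral_max_one_rpow_le_of_meas_lt_le {m0 : MeasurableSpace Ω} {ν : Measure Ω}
    {Z : Ω → ℝ} (hZ : AEMeasurable Z ν) {C α γ : ℝ} (hC : 0 ≤ C) (hγ : 0 < γ) (hγα : γ < α)
    (htail : ∀ t, 1 < t → ν {ω | t < Z ω} ≤ ENNReal.ofReal (C * t ^ (-α)) * ν univ) :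
    ∫⁻ ω, ENNReal.ofReal (max (Z ω) 1 ^ γ) ∂ν ≤
      ENNReal.ofReal (1 + γ * C / (α - γ)) * ν univ := by
  have hαγ : 0 < α - γ := by linarith
  have hnear : ∫⁻ t in Ioc 0 1, ν {ω | t < max (Z ω) 1} * ENNReal.ofReal (t ^ (γ - 1)) ≤
      ν univ * ENNReal.ofReal (1 / γ) := calc
    _ ≤ ∫⁻ t in Ioc 0 1, ν univ * ENNReal.ofReal (t ^ (γ - 1)) :=
      lintegral_mono fun t => by gcongr; exact subset_univ _
    _ = ν univ * ENNReal.ofReal (1 / γ) := by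
      rw [lintegral_const_mul _ (by fun_prop), lintegral_Ioc_zero_one_rpow (by linarith),
        sub_add_cancel]
  have hfar : ∫⁻ t in Ioi 1, ν {ω | t < max (Z ω) 1} * ENNReal.ofReal (t ^ (γ - 1)) ≤
      ν univ * (ENNReal.ofReal C * ENNReal.ofReal (1 / (α - γ))) := calc
    _ ≤ ∫⁻ t in Ioi 1, ν univ * (ENNReal.ofReal C * ENNReal.ofReal (t ^ (γ - 1 - α))) := by
      refine setLIntegral_mono (by fun_prop) fun t (ht : 1 < t) => ?_
      have hset : {ω | t < max (Z ω) 1} = {ω | t < Z ω} := by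
        ext ω; simp [ht.not_gt]
      calc ν {ω | t < max (Z ω) 1} * ENNReal.ofReal (t ^ (γ - 1))
          ≤ ENNReal.ofReal (C * t ^ (-α)) * ν univ * ENNReal.ofReal (t ^ (γ - 1)) := by
            rw [hset]; gcongr; exact htail t ht
        _ = _ := by
          rw [mul_comm _ (ν univ), mul_assoc, ← ENNReal.ofReal_mul (by positivity),
            ← ENNReal.ofReal_mul hC, mul_assoc, ← Real.rpow_add (by linarith),
            neg_add_eq_sub]
    _ = ν univ * (ENNReal.ofReal C * ENNReal.ofReal (1 / (α - γ))) := by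
      rw [lintegral_const_mul _ (by fun_prop), lintegral_const_mul' _ _ ENNReal.ofReal_ne_top,
        lintegral_Ioi_one_rpow (by linarith), show γ - 1 - α + 1 = -(α - γ) by ring, div_neg, neg_div, neg_neg]
  have hconst : ENNReal.ofReal γ * (ENNReal.ofReal (1 / γ) +
      ENNReal.ofReal C * ENNReal.ofReal (1 / (α - γ))) = ENNReal.ofReal (1 + γ * C / (α - γ)) := by
    rw [← ENNReal.ofReal_mul hC, ← ENNReal.ofReal_add (by positivity) (by positivity),
      ← ENNReal.ofReal_mul hγ.le]
    congr 1
    field_simp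
  rw [lintegral_rpow_eq_lintegral_meas_lt_mul ν (ae_of_all _ fun ω => zero_le_one.trans
      (le_max_right _ _)) (hZ.max aemeasurable_const) hγ,
    ← Ioc_union_Ioi_eq_Ioi zero_le_one, lintegral_union measurableSet_Ioi Ioc_disjoint_Ioi_same,
    ← hconst]
  calc _ ≤ ENNReal.ofReal γ * (ν univ * ENNReal.ofReal (1 / γ) +
        ν univ * (ENNReal.ofReal C * ENNReal.ofReal (1 / (α - γ)))) := by gcongr
    _ = _ := by ring

theorem setIntegral_le_mul_integral_of_condExp_indicator_le {m m0 : MeasurableSpace Ω}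
    {μ : Measure Ω} [IsFiniteMeasure μ] (hm : m ≤ m0) {Y : Ω → ℝ} (hY : StronglyMeasurable[m] Y)
    (hY0 : ∀ ω, 0 ≤ Y ω) (hYi : Integrable Y μ) {s : Set Ω} (hs : MeasurableSet s) {c : ℝ}
    (hc : ∀ᵐ ω ∂μ, μ[s.indicator (fun _ => (1 : ℝ)) | m] ω ≤ c) :
    ∫ ω in s, Y ω ∂μ ≤ c * ∫ ω, Y ω ∂μ := by
  set g := s.indicator fun _ : Ω => (1 : ℝ)
  have hYg : Y * g = s.indicator Y := by
    ext ω; by_cases hω : ω ∈ s <;> simp [g, hω]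
  have hpull : μ[Y * g | m] =ᵐ[μ] Y * μ[g | m] :=
    condExp_mul_of_stronglyMeasurable_left hY (hYg ▸ hYi.indicator hs)
      ((integrable_const 1).indicator hs)
  calc ∫ ω in s, Y ω ∂μ = ∫ ω, (Y * g) ω ∂μ := by rw [hYg, integral_indicator hs]
    _ = ∫ ω, μ[Y * g | m] ω ∂μ := (integral_condExp hm).symm
    _ = ∫ ω, Y ω * μ[g | m] ω ∂μ := integral_congr_ae hpull
    _ ≤ ∫ ω, Y ω * c ∂μ := integral_mono_ae (integrable_condExp.congr hpull) (hYi.mul_const c)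
      (hc.mono fun ω h => mul_le_mul_of_nonneg_left h (hY0 ω))
    _ = c * ∫ ω, Y ω ∂μ := by rw [integral_mul_const, mul_comm]

theorem lintegral_mul_max_one_rpow_le {m m0 : MeasurableSpace Ω} {μ : Measure Ω}
    [IsFiniteMeasure μ] (hm : m ≤ m0) {Y Z : Ω → ℝ} (hY : StronglyMeasurable[m] Y)
    (hY0 : ∀ ω, 0 ≤ Y ω) (hYi : Integrable Y μ) (hZ : Measurable Z) {C α γ : ℝ} (hC : 0 ≤ C)
    (hγ : 0 < γ) (hγα : γ < α)
    (htail : ∀ x, 1 ≤ x →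
      ∀ᵐ ω ∂μ, μ[{ω' | x < Z ω'}.indicator (fun _ => (1 : ℝ)) | m] ω ≤ C * x ^ (-α)) :
    ∫⁻ ω, ENNReal.ofReal (Y ω) * ENNReal.ofReal (max (Z ω) 1 ^ γ) ∂μ ≤
      ENNReal.ofReal (1 + γ * C / (α - γ)) * ∫⁻ ω, ENNReal.ofReal (Y ω) ∂μ := by
  set ν := μ.withDensity fun ω => ENNReal.ofReal (Y ω)
  have hYm : Measurable Y := (hY.mono hm).measurable
  have hν : ∀ s, MeasurableSet s → ν s = ENNReal.ofReal (∫ ω in s, Y ω ∂μ) := fun s hs => by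
    rw [withDensity_apply _ hs,
      ofReal_integral_eq_lintegral_ofReal hYi.integrableOn (ae_of_all _ hY0)]
  have hνuniv : ν univ = ∫⁻ ω, ENNReal.ofReal (Y ω) ∂μ := by
    rw [withDensity_apply _ MeasurableSet.univ, Measure.restrict_univ]
  rw [← hνuniv]
  refine (lintegral_withDensity_eq_lintegral_mul _ hYm.ennreal_ofReal (by fun_prop)).symm.trans_le
    (lintegral_max_one_rpow_le_of_meas_lt_le hZ.aemeasurable hC hγ hγα fun t ht => ?_)
  have hs : MeasurableSet {ω | t < Z ω} := measurableSet_lt measurable_const hZ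
  rw [hν _ hs, hν _ MeasurableSet.univ, setIntegral_univ, ← ENNReal.ofReal_mul (by positivity)]
  exact ENNReal.ofReal_le_ofReal (setIntegral_le_mul_integral_of_condExp_indicator_le hm hY hY0
    hYi hs (htail t ht.le))

theorem lintegral_prod_max_one_rpow_le {m0 : MeasurableSpace Ω} (μ : Measure Ω)
    [IsProbabilityMeasure μ] (ℱ : Filtration ℕ m0) {X : ℕ → Ω → ℝ}
    (hX : ∀ i, StronglyMeasurable[ℱ (i + 1)] (X i)) {C α γ : ℝ} (hC : 0 ≤ C) (hγ : 0 < γ)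
    (hγα : γ < α)
    (htail : ∀ i, ∀ x, 1 ≤ x →
      ∀ᵐ ω ∂μ, μ[{ω' | x < X i ω'}.indicator (fun _ => (1 : ℝ)) | ℱ i] ω ≤ C * x ^ (-α))
    (n : ℕ) :
    ∫⁻ ω, ENNReal.ofReal (∏ i ∈ Finset.range n, max (X i ω) 1 ^ γ) ∂μ ≤
      ENNReal.ofReal (1 + γ * C / (α - γ)) ^ n := by
  induction n with
  | zero => simp
  | succ n ih =>
    set Y : Ω → ℝ := fun ω => ∏ i ∈ Finset.range n, max (X i ω) 1 ^ γ
    have hY0 : ∀ ω, 0 ≤ Y ω := fun ω =>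
      Finset.prod_nonneg fun i _ => Real.rpow_nonneg (zero_le_one.trans (le_max_right _ _)) _
    have hYm : StronglyMeasurable[ℱ n] Y := by
      refine Measurable.stronglyMeasurable (Finset.measurable_prod _ fun i hi => ?_)
      exact (((hX i).mono (ℱ.mono (Finset.mem_range.1 hi))).measurable.max
        measurable_const).pow_const γ
    have hYi : Integrable Y μ := by
      refine ⟨(hYm.mono (ℱ.le n)).aestronglyMeasurable, ?_⟩
      rw [hasFiniteIntegral_iff_ofReal (ae_of_all _ hY0)]
      exact ih.trans_lt (ENNReal.pow_lt_top ENNReal.ofReal_lt_top)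
    calc ∫⁻ ω, ENNReal.ofReal (∏ i ∈ Finset.range (n + 1), max (X i ω) 1 ^ γ) ∂μ
        = ∫⁻ ω, ENNReal.ofReal (Y ω) * ENNReal.ofReal (max (X n ω) 1 ^ γ) ∂μ := by
          refine lintegral_congr fun ω => ?_
          rw [Finset.prod_range_succ, ENNReal.ofReal_mul (hY0 ω)]
      _ ≤ ENNReal.ofReal (1 + γ * C / (α - γ)) * ∫⁻ ω, ENNReal.ofReal (Y ω) ∂μ :=
          lintegral_mul_max_one_rpow_le (ℱ.le n) hYm hY0 hYi
            ((hX n).mono (ℱ.le (n + 1))).measurable hC hγ hγα (htail n)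
      _ ≤ ENNReal.ofReal (1 + γ * C / (α - γ)) ^ (n + 1) := by
          rw [pow_succ']; gcongr

lemma rpow_mul_prod_le_rpow_mul_prod_max_one {ι : Type*} (s : Finset ι) {f : ι → ℝ}
    (hf : ∀ i ∈ s, 0 ≤ f i) {c γ : ℝ} (hc : 0 ≤ c) (hγ : 0 ≤ γ) :
    (c * ∏ i ∈ s, f i) ^ γ ≤ c ^ γ * ∏ i ∈ s, max (f i) 1 ^ γ := by
  have h1 : ∀ i ∈ s, 0 ≤ max (f i) 1 := fun i _ => zero_le_one.trans (le_max_right _ _)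
  calc (c * ∏ i ∈ s, f i) ^ γ ≤ (c * ∏ i ∈ s, max (f i) 1) ^ γ := by
        refine Real.rpow_le_rpow (mul_nonneg hc (Finset.prod_nonneg hf)) ?_ hγ
        exact mul_le_mul_of_nonneg_left (Finset.prod_le_prod hf fun i _ => le_max_left _ _) hc
    _ = c ^ γ * ∏ i ∈ s, max (f i) 1 ^ γ := by
        rw [Real.mul_rpow hc (Finset.prod_nonneg h1), Real.finsetProd_rpow _ _ h1]

lemma mul_rpow_one_div_rpow_natCast_mul {a b γ : ℝ} (ha : 0 ≤ a) (hb : 0 ≤ b) (hγ : γ ≠ 0)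
    (k : ℕ) : (a * b ^ (1 / γ)) ^ ((k : ℝ) * γ) = (a ^ k) ^ γ * b ^ k := by
  rw [Real.mul_rpow ha (by positivity), ← Real.rpow_natCast a k, ← Real.rpow_mul ha,
    ← Real.rpow_mul hb, one_div_mul_eq_div, mul_div_cancel_right₀ _ hγ, Real.rpow_natCast]

end

theorem stmt2_general {Ω : Type*} {m0 : MeasurableSpace Ω} (μ : Measure Ω) [IsProbabilityMeasure μ]
    (ℱ : Filtration ℕ m0) (X : ℕ → Ω → ℝ)
    (hXmeas : ∀ i : ℕ, StronglyMeasurable[ℱ (i + 1)] (X (i + 1)))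
    (hX0 : ∀ (i : ℕ) (ω : Ω), 0 ≤ X (i + 1) ω)
    (Cα α : ℝ) (hCα : 0 < Cα)
    (hXtail : ∀ i : ℕ, ∀ x : ℝ, 1 ≤ x →
      ∀ᵐ ω ∂μ,
        (μ[Set.indicator {ω' | x < X (i + 1) ω'} (fun _ => (1 : ℝ)) | ℱ i]) ω ≤ Cα * x ^ (-α)) :
    ∀ γ : ℝ, 0 < γ → γ < α → ∀ ε : ℝ, 0 < ε → ∀ k : ℕ, 1 ≤ k →
      ∫ ω, (ε ^ k * ∏ j ∈ Finset.Icc 1 k, X j ω) ^ γ ∂μ ≤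
        (ε * (1 + γ * Cα / (α - γ)) ^ (1 / γ)) ^ ((k : ℝ) * γ) := by
  intro γ hγ hγα ε hε k _
  set M := 1 + γ * Cα / (α - γ)
  have hM : 0 ≤ M := by
    have : 0 < α - γ := by linarith
    positivity
  have hprod : ∀ ω, ∏ j ∈ Finset.Icc 1 k, X j ω = ∏ i ∈ Finset.range k, X (i + 1) ω := fun ω => by
    rw [← Finset.Ico_add_one_right_eq_Icc, Finset.prod_Ico_eq_prod_range, add_tsub_cancel_right]
    simp only [add_comm 1]
  have hbase : ∀ ω, 0 ≤ ε ^ k * ∏ i ∈ Finset.range k, X (i + 1) ω := fun ω =>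
    mul_nonneg (by positivity) (Finset.prod_nonneg fun i _ => hX0 i ω)
  have hmeas : Measurable fun ω => (ε ^ k * ∏ i ∈ Finset.range k, X (i + 1) ω) ^ γ := by
    have := fun i => ((hXmeas i).mono (ℱ.le (i + 1))).measurable
    fun_prop
  simp_rw [hprod]
  rw [integral_eq_lintegral_of_nonneg_ae (ae_of_all _ fun ω => Real.rpow_nonneg (hbase ω) _)
    hmeas.aestronglyMeasurable]
  refine ENNReal.toReal_le_of_le_ofReal (by positivity) ?_
  calc ∫⁻ ω, ENNReal.ofReal ((ε ^ k * ∏ i ∈ Finset.range k, X (i + 1) ω) ^ γ) ∂μ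
      ≤ ∫⁻ ω, ENNReal.ofReal ((ε ^ k) ^ γ) *
          ENNReal.ofReal (∏ i ∈ Finset.range k, max (X (i + 1) ω) 1 ^ γ) ∂μ :=
        lintegral_mono fun ω => by
          rw [← ENNReal.ofReal_mul (by positivity)]
          exact ENNReal.ofReal_le_ofReal (rpow_mul_prod_le_rpow_mul_prod_max_one _
            (fun i _ => hX0 i ω) (by positivity) hγ.le)
    _ ≤ ENNReal.ofReal ((ε ^ k) ^ γ) * ENNReal.ofReal M ^ k := by
        rw [lintegral_const_mul' _ _ ENNReal.ofReal_ne_top]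
        gcongr
        exact lintegral_prod_max_one_rpow_le μ ℱ hXmeas hCα.le hγ hγα hXtail k
    _ = ENNReal.ofReal ((ε * M ^ (1 / γ)) ^ ((k : ℝ) * γ)) := by
        rw [← ENNReal.ofReal_pow hM, ← ENNReal.ofReal_mul (by positivity),
          mul_rpow_one_div_rpow_natCast_mul hε.le hM hγ.ne']

/-- Given a filtration `ℱ` and nonnegative `ℱ i`-measurable random variables `X i`
(`i ≥ 1`) with conditional tail bounds `P(X_{i+1} > x | ℱ i) ≤ C_α x^{-α}` for `x ≥ 1`, then for
every `0 < γ < α`, every `ε > 0` and every `k ≥ 1`,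
`E[(ε^k Π_k)^γ] ≤ (ε (1 + γ C_α/(α-γ))^{1/γ})^{kγ}`, where `Π_k = ∏_{j=1}^k X_j`. -/
theorem stmt2 {Ω : Type*} {m0 : MeasurableSpace Ω} (μ : Measure Ω) [IsProbabilityMeasure μ]
    (ℱ : Filtration ℕ m0) (X : ℕ → Ω → ℝ)
    (hXmeas : ∀ i : ℕ, StronglyMeasurable[ℱ (i + 1)] (X (i + 1)))
    (hX0 : ∀ (i : ℕ) (ω : Ω), 0 ≤ X (i + 1) ω)
    (Cα α : ℝ) (hCα : 0 < Cα) (hα : 0 < α)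
    (hXtail : ∀ i : ℕ, ∀ x : ℝ, 1 ≤ x →
      ∀ᵐ ω ∂μ,
        (μ[Set.indicator {ω' | x < X (i + 1) ω'} (fun _ => (1 : ℝ)) | ℱ i]) ω ≤ Cα * x ^ (-α)) :
    ∀ γ : ℝ, 0 < γ → γ < α → ∀ ε : ℝ, 0 < ε → ∀ k : ℕ, 1 ≤ k →
      ∫ ω, (ε ^ k * ∏ j ∈ Finset.Icc 1 k, X j ω) ^ γ ∂μ ≤
        (ε * (1 + γ * Cα / (α - γ)) ^ (1 / γ)) ^ ((k : ℝ) * γ) :=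
  stmt2_general μ ℱ X hXmeas hX0 Cα α hCα hXtail
end

section
/- Suppose there are constants C_α, C_β > 0 and α, β > 0 such that for every i ≥ 0, every real x ≥ 1 and every real t ≥ 1 one has, almost surely, P(X_{i+1} > x | 𝓕_i) ≤ C_α x^{-α} and P(τ_{i+1} > t | 𝓕_i) ≤ C_β t^{-β}. Fix γ with 0 < γ < min(α, β) and let ε₀ > 0 be determined by ε₀ (1 + γ C_α/(α−γ))^{1/γ} = 4^{-β/γ}. Then there is a constant C' > 0 depending only on β and C_β such that for all t ≥ 1, P( Σ_{k=0}^∞ ε₀^k Π_k τ_{k+1} > t · Σ_{k=0}^∞ 2^{-k} (ε₀^k Π_k)^{1−γ/β} ) ≤ C' t^{-β}, where by convention the event fails on the set where the right-hand series is infinite. -/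
/-!
Write `W_k = ε₀^k Π_k`. Since `W_i^γ` is `𝓕_i`-measurable, the conditional tail of `X_{i+1}`
survives integration against it, and the layer cake formula gives
`E[W_i^γ X_{i+1}^γ] ≤ (1 + γ C_α/(α-γ)) E[W_i^γ]`; by the choice of `ε₀` this yields
`E[W_k^γ] ≤ 4^{-βk}`. On the event of the theorem some term satisfies
`t 2^{-k} W_k^{1-γ/β} < W_k τ_{k+1}`, i.e. `t 2^{-k} < τ_{k+1} W_k^{γ/β}`. Splitting the
`𝓕_k`-measurable factor `W_k^{γ/β}` into dyadic shells and using the conditional tail of `τ_{k+1}`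
on each shell bounds the probability of this by `(1 + C_β) 2^β (t 2^{-k})^{-β} E[W_k^γ]
≤ (1 + C_β) 2^β t^{-β} 2^{-βk}`, which is summable in `k`.
-/

open MeasureTheory Set
open scoped ENNReal

lemma exists_mem_Ico_zpow_of_lt_mul {c y T : ℝ} (hc : 0 < c) (hy : 0 ≤ y) (hcT : c < T * y)
    (hyc : y ≤ c / 2) :
    ∃ n : ℤ, y ∈ Ico ((2 : ℝ) ^ n) (2 ^ (n + 1)) ∧ 1 ≤ c / 2 ^ (n + 1) ∧ c / 2 ^ (n + 1) < T := by
  have hy0 : 0 < y := hy.lt_of_ne (by rintro rfl; rw [mul_zero] at hcT; linarith)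
  obtain ⟨n, hn⟩ := exists_mem_Ico_zpow hy0 one_lt_two
  have h2n : (0 : ℝ) < 2 ^ (n + 1) := zpow_pos two_pos _
  refine ⟨n, hn, ?_, ?_⟩
  · rw [one_le_div h2n, zpow_add_one₀ two_ne_zero]
    linarith [hn.1]
  · calc c / 2 ^ (n + 1) < c / y := div_lt_div_of_pos_left hc hy0 hn.2
      _ < T := (div_lt_iff₀ hy0).2 hcT

lemma lt_mul_rpow_of_mul_rpow_one_sub_lt {s z y p : ℝ} (hz : 0 ≤ z) (hp : p < 1)
    (h : s * z ^ (1 - p) < z * y) : s < y * z ^ p := by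
  have hz0 : 0 < z := hz.lt_of_ne <| by
    rintro rfl
    rw [Real.zero_rpow (by linarith), mul_zero, zero_mul] at h
    exact h.false
  have hsplit : z = z ^ (1 - p) * z ^ p := by
    rw [← Real.rpow_add hz0, sub_add_cancel, Real.rpow_one]
  have hpos : 0 < z ^ (1 - p) := Real.rpow_pos_of_pos hz0 _
  nth_rewrite 2 [hsplit] at h
  nlinarith

lemma exists_mul_lt_of_ofReal_mul_tsum_lt {t : ℝ} (ht : 0 ≤ t) {a b : ℕ → ℝ}
    (h : ENNReal.ofReal t * ∑' k, ENNReal.ofReal (a k) < ∑' k, ENNReal.ofReal (b k)) :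
    ∃ k, t * a k < b k := by
  by_contra! hab
  refine h.not_ge ?_
  rw [← ENNReal.tsum_mul_left]
  exact ENNReal.tsum_le_tsum fun k => (ENNReal.ofReal_le_ofReal (hab k)).trans_eq
    (ENNReal.ofReal_mul ht)

lemma rpow_mul_eq_of_mul_rpow_one_div_eq {ε D a b γ : ℝ} (hε : 0 ≤ ε) (hD : 0 ≤ D) (ha : 0 ≤ a)
    (hγ : γ ≠ 0) (h : ε * D ^ (1 / γ) = a ^ (b / γ)) : ε ^ γ * D = a ^ b := by
  have h' := congrArg (· ^ γ) h
  rwa [Real.mul_rpow hε (Real.rpow_nonneg hD _), ← Real.rpow_mul hD, one_div_mul_cancel hγ,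
    Real.rpow_one, ← Real.rpow_mul ha, div_mul_cancel₀ _ hγ] at h'

lemma ofReal_mul_rpow_neg_mul_half_pow {K t β : ℝ} (ht : 0 < t) (k : ℕ) :
    ENNReal.ofReal (K * (t * (1 / 2) ^ k) ^ (-β)) * ENNReal.ofReal ((4 : ℝ) ^ (-β)) ^ k
      = ENNReal.ofReal (K * t ^ (-β)) * ENNReal.ofReal ((2 : ℝ) ^ (-β)) ^ k := by
  have hhalf : ((1 / 2 : ℝ) ^ k) ^ (-β) = ((2 : ℝ) ^ β) ^ k := by
    rw [← Real.rpow_pow_comm (by norm_num), one_div, Real.inv_rpow zero_le_two,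
      Real.rpow_neg zero_le_two, inv_inv]
  have hfour : (4 : ℝ) ^ (-β) = 2 ^ (-β) * 2 ^ (-β) := by
    rw [← Real.mul_rpow zero_le_two zero_le_two]
    norm_num
  have hcancel : ((2 : ℝ) ^ β * 2 ^ (-β)) ^ k = 1 := by
    rw [Real.rpow_neg zero_le_two, mul_inv_cancel₀ (by positivity), one_pow]
  rw [← ENNReal.ofReal_pow (by positivity), ← ENNReal.ofReal_pow (by positivity),
    Real.mul_rpow ht.le (by positivity), hhalf, hfour, ← ENNReal.ofReal_mul' (by positivity),
    ← ENNReal.ofReal_mul' (by positivity)]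
  congr 1
  linear_combination K * t ^ (-β) * ((2 : ℝ) ^ (-β)) ^ k * hcancel

lemma tsum_ofReal_mul_rpow_two_neg_pow {a β : ℝ} (ha : 0 ≤ a) (hβ : 0 < β) :
    ∑' k : ℕ, ENNReal.ofReal a * ENNReal.ofReal ((2 : ℝ) ^ (-β)) ^ k
      = ENNReal.ofReal (a / (1 - 2 ^ (-β))) := by
  have hq : (2 : ℝ) ^ (-β) < 1 := Real.rpow_lt_one_of_one_lt_of_neg one_lt_two (by linarith)
  rw [ENNReal.tsum_mul_left, ENNReal.tsum_geometric, ← ENNReal.ofReal_one,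
    ← ENNReal.ofReal_sub _ (by positivity), ← ENNReal.ofReal_inv_of_pos (by linarith),
    ← ENNReal.ofReal_mul ha, div_eq_mul_inv]

lemma lintegral_Ioc_zero_one_rpow_s3 {γ : ℝ} (hγ : 0 < γ) :
    ∫⁻ x in Ioc (0 : ℝ) 1, ENNReal.ofReal (x ^ (γ - 1)) = ENNReal.ofReal γ⁻¹ := by
  rw [← ofReal_integral_eq_lintegral_ofReal]
  · rw [← intervalIntegral.integral_of_le zero_le_one, integral_rpow (Or.inl (by linarith)),
      sub_add_cancel, Real.one_rpow, Real.zero_rpow hγ.ne', sub_zero, one_div]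
  · exact (intervalIntegrable_iff_integrableOn_Ioc_of_le zero_le_one).1
      (intervalIntegral.intervalIntegrable_rpow' (by linarith))
  · exact (ae_restrict_iff' measurableSet_Ioc).2
      (ae_of_all _ fun x hx => Real.rpow_nonneg hx.1.le _)

lemma lintegral_Ioi_one_rpow_s3 {a : ℝ} (ha : a < 0) :
    ∫⁻ x in Ioi (1 : ℝ), ENNReal.ofReal (x ^ (a - 1)) = ENNReal.ofReal (-a)⁻¹ := by
  rw [← ofReal_integral_eq_lintegral_ofReal]
  · rw [integral_Ioi_rpow_of_lt (by linarith) one_pos, sub_add_cancel, Real.one_rpow]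
    congr 1
    field_simp
  · exact integrableOn_Ioi_rpow_of_lt (by linarith) one_pos
  · exact (ae_restrict_iff' measurableSet_Ioi).2
      (ae_of_all _ fun x hx => Real.rpow_nonneg (zero_le_one.trans hx.le) _)

lemma lintegral_rpow_tail_profile {C α γ : ℝ} (hC : 0 ≤ C) (hγ : 0 < γ) (hγα : γ < α) :
    ENNReal.ofReal γ * ((∫⁻ x in Ioc (0 : ℝ) 1, ENNReal.ofReal (x ^ (γ - 1)))
        + ENNReal.ofReal C * ∫⁻ x in Ioi (1 : ℝ), ENNReal.ofReal (x ^ (γ - α - 1)))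
      = ENNReal.ofReal (1 + γ * C / (α - γ)) := by
  have hαγ : 0 < α - γ := by linarith
  rw [lintegral_Ioc_zero_one_rpow_s3 hγ, lintegral_Ioi_one_rpow_s3 (by linarith), neg_sub,
    ← ENNReal.ofReal_mul hC, ← ENNReal.ofReal_add (by positivity) (by positivity),
    ← ENNReal.ofReal_mul hγ.le]
  congr 1
  field_simp

namespace MeasureTheory

variable {Ω : Type*} {m m0 : MeasurableSpace Ω} {μ : Measure Ω}

/-- The conditional tail bound `P(Z > x | m) ≤ C x^(-p)` for `x ≥ 1`, integrated over the
`m`-measurable events. -/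
def CondPowerTail (m : MeasurableSpace Ω) (μ : Measure[m0] Ω) (Z : Ω → ℝ) (C p : ℝ) : Prop :=
  ∀ x : ℝ, 1 ≤ x → ∀ A : Set Ω, MeasurableSet[m] A →
    μ (A ∩ {ω | x < Z ω}) ≤ ENNReal.ofReal (C * x ^ (-p)) * μ A

lemma measure_inter_le_of_condExp_indicator_le [IsFiniteMeasure μ] (hm : m ≤ m0) {B : Set Ω}
    (hB : MeasurableSet B) {c : ℝ} (hc : 0 ≤ c)
    (h : ∀ᵐ ω ∂μ, (μ[B.indicator (fun _ => (1 : ℝ)) | m]) ω ≤ c)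
    {A : Set Ω} (hA : MeasurableSet[m] A) :
    μ (A ∩ B) ≤ ENNReal.ofReal c * μ A := by
  have hint : Integrable (B.indicator fun _ => (1 : ℝ)) μ := (integrable_const 1).indicator hB
  have hAB : μ.real (A ∩ B) ≤ c * μ.real A :=
    calc μ.real (A ∩ B) = ∫ ω in A, B.indicator (fun _ => (1 : ℝ)) ω ∂μ := by
          rw [setIntegral_indicator hB, setIntegral_const, smul_eq_mul, mul_one]
      _ = ∫ ω in A, (μ[B.indicator (fun _ => (1 : ℝ)) | m]) ω ∂μ :=
          (setIntegral_condExp hm hint hA).symm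
      _ ≤ ∫ _ in A, c ∂μ :=
          integral_mono_ae integrable_condExp.restrict (integrable_const c) (ae_restrict_of_ae h)
      _ = c * μ.real A := by rw [setIntegral_const, smul_eq_mul, mul_comm]
  rw [← ofReal_measureReal, ← ofReal_measureReal, ← ENNReal.ofReal_mul hc]
  exact ENNReal.ofReal_le_ofReal hAB

lemma condPowerTail_of_condExp [IsFiniteMeasure μ] (hm : m ≤ m0) {Z : Ω → ℝ}
    (hZ : Measurable Z) {C p : ℝ} (hC : 0 ≤ C)
    (h : ∀ x : ℝ, 1 ≤ x → ∀ᵐ ω ∂μ,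
      (μ[{ω' | x < Z ω'}.indicator (fun _ => (1 : ℝ)) | m]) ω ≤ C * x ^ (-p)) :
    CondPowerTail m μ Z C p := fun x hx _ hA =>
  measure_inter_le_of_condExp_indicator_le hm (measurableSet_lt measurable_const hZ)
    (mul_nonneg hC (Real.rpow_nonneg (zero_le_one.trans hx) _)) (h x hx) hA

lemma setLIntegral_le_mul_lintegral_of_measure_inter_le (hm : m ≤ m0) {B : Set Ω}
    {c : ℝ≥0∞} (h : ∀ A : Set Ω, MeasurableSet[m] A → μ (A ∩ B) ≤ c * μ A)
    {f : Ω → ℝ≥0∞} (hf : Measurable[m] f) :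
    ∫⁻ ω in B, f ω ∂μ ≤ c * ∫⁻ ω, f ω ∂μ := by
  have hle : (μ.restrict B).trim hm ≤ c • μ.trim hm := by
    refine Measure.le_iff.2 fun s hs => ?_
    rw [trim_measurableSet_eq hm hs, Measure.smul_apply, trim_measurableSet_eq hm hs,
      Measure.restrict_apply (hm s hs), smul_eq_mul]
    exact h s hs
  calc ∫⁻ ω in B, f ω ∂μ = ∫⁻ ω, f ω ∂((μ.restrict B).trim hm) := (lintegral_trim hm hf).symm
    _ ≤ ∫⁻ ω, f ω ∂(c • μ.trim hm) := lintegral_mono' hle le_rfl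
    _ = c * ∫⁻ ω, f ω ∂μ := by rw [lintegral_smul_measure, lintegral_trim hm hf, smul_eq_mul]

lemma CondPowerTail.withDensity_lt_le {Z : Ω → ℝ} {C α : ℝ} (hZ : CondPowerTail m μ Z C α)
    (hm : m ≤ m0) (hZm : Measurable Z) {f : Ω → ℝ≥0∞} (hf : Measurable[m] f) {x : ℝ}
    (hx : 1 ≤ x) :
    μ.withDensity f {ω | x < Z ω} ≤ ENNReal.ofReal (C * x ^ (-α)) * ∫⁻ ω, f ω ∂μ := by
  rw [withDensity_apply _ (measurableSet_lt measurable_const hZm)]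
  exact setLIntegral_le_mul_lintegral_of_measure_inter_le hm (hZ x hx) hf

lemma CondPowerTail.lintegral_mul_rpow_le {Z : Ω → ℝ} {C α γ : ℝ} (hZ : CondPowerTail m μ Z C α)
    (hm : m ≤ m0) (hZm : Measurable Z) (hZ0 : ∀ ω, 0 ≤ Z ω) (hC : 0 ≤ C) (hγ : 0 < γ)
    (hγα : γ < α) {f : Ω → ℝ≥0∞} (hf : Measurable[m] f) :
    ∫⁻ ω, f ω * ENNReal.ofReal (Z ω ^ γ) ∂μ
      ≤ ENNReal.ofReal (1 + γ * C / (α - γ)) * ∫⁻ ω, f ω ∂μ := by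
  -- layer cake formula for the weighted measure `ν`: its tail is trivially bounded below level
  -- `1` and inherits the power tail of `Z` above it
  set ν := μ.withDensity f
  set I := ∫⁻ ω, f ω ∂μ
  have hν_le : ∀ x ∈ Ioc (0 : ℝ) 1, ν {ω | x < Z ω} * ENNReal.ofReal (x ^ (γ - 1))
      ≤ I * ENNReal.ofReal (x ^ (γ - 1)) := fun x _ => by
    gcongr
    calc ν {ω | x < Z ω} ≤ ν univ := measure_mono (subset_univ _)
      _ = I := by rw [withDensity_apply _ MeasurableSet.univ, Measure.restrict_univ]
  have hν_tail : ∀ x ∈ Ioi (1 : ℝ), ν {ω | x < Z ω} * ENNReal.ofReal (x ^ (γ - 1))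
      ≤ ENNReal.ofReal C * I * ENNReal.ofReal (x ^ (γ - α - 1)) := fun x hx => by
    have hx0 : 0 < x := zero_lt_one.trans hx
    calc ν {ω | x < Z ω} * ENNReal.ofReal (x ^ (γ - 1))
        ≤ ENNReal.ofReal (C * x ^ (-α)) * I * ENNReal.ofReal (x ^ (γ - 1)) := by
          gcongr
          exact hZ.withDensity_lt_le hm hZm hf hx.le
      _ = ENNReal.ofReal C * I * (ENNReal.ofReal (x ^ (-α)) * ENNReal.ofReal (x ^ (γ - 1))) := by
          rw [ENNReal.ofReal_mul hC]
          ring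
      _ = ENNReal.ofReal C * I * ENNReal.ofReal (x ^ (γ - α - 1)) := by
          rw [← ENNReal.ofReal_mul (by positivity), ← Real.rpow_add hx0]
          ring_nf
  have hmeas : ∀ a : ℝ, Measurable fun x : ℝ => ENNReal.ofReal (x ^ a) := fun a =>
    (measurable_id.pow_const a).ennreal_ofReal
  calc ∫⁻ ω, f ω * ENNReal.ofReal (Z ω ^ γ) ∂μ = ∫⁻ ω, ENNReal.ofReal (Z ω ^ γ) ∂ν :=
        (lintegral_withDensity_eq_lintegral_mul μ (hf.mono hm le_rfl)
          (hZm.pow_const γ).ennreal_ofReal).symm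
    _ = ENNReal.ofReal γ * ((∫⁻ x in Ioc 0 1, ν {ω | x < Z ω} * ENNReal.ofReal (x ^ (γ - 1)))
          + ∫⁻ x in Ioi 1, ν {ω | x < Z ω} * ENNReal.ofReal (x ^ (γ - 1))) := by
        rw [lintegral_rpow_eq_lintegral_meas_lt_mul ν (ae_of_all _ hZ0) hZm.aemeasurable hγ,
          ← lintegral_union measurableSet_Ioi Ioc_disjoint_Ioi_same,
          Ioc_union_Ioi_eq_Ioi zero_le_one]
    _ ≤ ENNReal.ofReal γ * ((∫⁻ x in Ioc 0 1, I * ENNReal.ofReal (x ^ (γ - 1)))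
          + ∫⁻ x in Ioi 1, ENNReal.ofReal C * I * ENNReal.ofReal (x ^ (γ - α - 1))) := by
        gcongr ENNReal.ofReal γ * (?_ + ?_)
        · exact setLIntegral_mono' measurableSet_Ioc hν_le
        · exact setLIntegral_mono' measurableSet_Ioi hν_tail
    _ = ENNReal.ofReal γ * ((∫⁻ x in Ioc 0 1, ENNReal.ofReal (x ^ (γ - 1)))
          + ENNReal.ofReal C * ∫⁻ x in Ioi 1, ENNReal.ofReal (x ^ (γ - α - 1))) * I := by
        rw [lintegral_const_mul _ (hmeas _), lintegral_const_mul _ (hmeas _)]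
        ring
    _ = ENNReal.ofReal (1 + γ * C / (α - γ)) * I := by
        rw [lintegral_rpow_tail_profile hC hγ hγα]

lemma measure_lt_le_rpow_neg_mul_lintegral_rpow {Y : Ω → ℝ} (hY : Measurable Y) {a β : ℝ}
    (ha : 0 < a) (hβ : 0 < β) :
    μ {ω | a < Y ω} ≤ ENNReal.ofReal (a ^ (-β)) * ∫⁻ ω, ENNReal.ofReal (Y ω ^ β) ∂μ := by
  have haβ : 0 < a ^ β := Real.rpow_pos_of_pos ha β
  calc μ {ω | a < Y ω}
      ≤ μ {ω | ENNReal.ofReal (a ^ β) ≤ ENNReal.ofReal (Y ω ^ β)} := measure_mono fun ω hω =>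
        ENNReal.ofReal_le_ofReal (Real.rpow_le_rpow ha.le (le_of_lt hω) hβ.le)
    _ ≤ (∫⁻ ω, ENNReal.ofReal (Y ω ^ β) ∂μ) / ENNReal.ofReal (a ^ β) :=
        meas_ge_le_lintegral_div (hY.pow_const β).ennreal_ofReal.aemeasurable
          (ENNReal.ofReal_pos.2 haβ).ne' ENNReal.ofReal_ne_top
    _ = ENNReal.ofReal (a ^ (-β)) * ∫⁻ ω, ENNReal.ofReal (Y ω ^ β) ∂μ := by
        rw [ENNReal.div_eq_inv_mul, ← ENNReal.ofReal_inv_of_pos haβ, ← Real.rpow_neg ha.le]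

lemma CondPowerTail.measure_preimage_Ico_zpow_inter_le {T Y : Ω → ℝ} {C β c : ℝ}
    (hT : CondPowerTail m μ T C β) (hm : m ≤ m0) (hY : Measurable[m] Y) (hC : 0 ≤ C)
    (hβ : 0 < β) (hc : 0 < c) {n : ℤ} (hn : 1 ≤ c / 2 ^ (n + 1)) :
    μ (Y ⁻¹' Ico (2 ^ n) (2 ^ (n + 1)) ∩ {ω | c / 2 ^ (n + 1) < T ω})
      ≤ ENNReal.ofReal (C * 2 ^ β * c ^ (-β)) *
        ∫⁻ ω in Y ⁻¹' Ico (2 ^ n) (2 ^ (n + 1)), ENNReal.ofReal (Y ω ^ β) ∂μ := by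
  have h2n : (0 : ℝ) < 2 ^ n := zpow_pos two_pos _
  have hlevel : C * (c / 2 ^ (n + 1)) ^ (-β) = C * 2 ^ β * c ^ (-β) * (2 ^ n) ^ β := by
    rw [Real.div_rpow hc.le (zpow_pos two_pos _).le, Real.rpow_neg (zpow_pos two_pos _).le,
      div_inv_eq_mul, zpow_add_one₀ two_ne_zero, Real.mul_rpow h2n.le zero_le_two]
    ring
  calc μ (Y ⁻¹' Ico (2 ^ n) (2 ^ (n + 1)) ∩ {ω | c / 2 ^ (n + 1) < T ω})
      ≤ ENNReal.ofReal (C * (c / 2 ^ (n + 1)) ^ (-β)) * μ (Y ⁻¹' Ico (2 ^ n) (2 ^ (n + 1))) :=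
        hT _ hn _ (hY measurableSet_Ico)
    _ = ENNReal.ofReal (C * 2 ^ β * c ^ (-β)) *
          ∫⁻ _ in Y ⁻¹' Ico (2 ^ n) (2 ^ (n + 1)), ENNReal.ofReal (((2 : ℝ) ^ n) ^ β) ∂μ := by
        rw [setLIntegral_const, hlevel, ENNReal.ofReal_mul (by positivity), mul_assoc]
    _ ≤ ENNReal.ofReal (C * 2 ^ β * c ^ (-β)) *
          ∫⁻ ω in Y ⁻¹' Ico (2 ^ n) (2 ^ (n + 1)), ENNReal.ofReal (Y ω ^ β) ∂μ := by
        refine mul_le_mul_right (setLIntegral_mono' (hm _ (hY measurableSet_Ico)) fun ω hω => ?_) _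
        exact ENNReal.ofReal_le_ofReal (Real.rpow_le_rpow h2n.le hω.1 hβ.le)

lemma CondPowerTail.measure_lt_mul_le {T Y : Ω → ℝ} {C β c : ℝ} (hT : CondPowerTail m μ T C β)
    (hm : m ≤ m0) (hY : Measurable[m] Y) (hY0 : ∀ ω, 0 ≤ Y ω) (hC : 0 ≤ C) (hβ : 0 < β)
    (hc : 0 < c) :
    μ {ω | c < T ω * Y ω}
      ≤ ENNReal.ofReal ((1 + C) * 2 ^ β * c ^ (-β)) * ∫⁻ ω, ENNReal.ofReal (Y ω ^ β) ∂μ := by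
  set shell : ℤ → Set Ω := fun n => Y ⁻¹' Ico (2 ^ n) (2 ^ (n + 1))
  set slice : ℤ → Set Ω := fun n => ⋃ (_ : 1 ≤ c / 2 ^ (n + 1)),
    shell n ∩ {ω | c / 2 ^ (n + 1) < T ω}
  set I := ∫⁻ ω, ENNReal.ofReal (Y ω ^ β) ∂μ
  have hYm : Measurable Y := hY.mono hm le_rfl
  -- On a shell, `c < T Y` forces `T > c / 2^(n+1)`; the shells where this level is below `1`
  -- lie in `{c / 2 < Y}`, which Markov's inequality handles.
  have hcover : {ω | c < T ω * Y ω} ⊆ {ω | c / 2 < Y ω} ∪ ⋃ n, slice n := by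
    intro ω hω
    by_cases h : c / 2 < Y ω
    · exact Or.inl h
    · obtain ⟨n, hn, h1, hTn⟩ :=
        exists_mem_Ico_zpow_of_lt_mul hc (hY0 ω) hω (not_lt.1 h)
      exact Or.inr (mem_iUnion.2 ⟨n, mem_iUnion.2 ⟨h1, hn, hTn⟩⟩)
  have hshells : ∑' n, ∫⁻ ω in shell n, ENNReal.ofReal (Y ω ^ β) ∂μ ≤ I := by
    have hdisj : Pairwise (Function.onFun Disjoint shell) := fun i j hij => by
      simpa only [Order.succ_eq_add_one] using
        ((zpow_right_mono₀ one_le_two).pairwise_disjoint_on_Ico_succ hij).preimage Y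
    rw [← lintegral_iUnion (fun n => hYm measurableSet_Ico) hdisj]
    exact setLIntegral_le_lintegral _ _
  have hslices : μ (⋃ n, slice n) ≤ ENNReal.ofReal (C * 2 ^ β * c ^ (-β)) * I :=
    calc μ (⋃ n, slice n) ≤ ∑' n, μ (slice n) := measure_iUnion_le _
      _ ≤ ∑' n, ENNReal.ofReal (C * 2 ^ β * c ^ (-β)) *
            ∫⁻ ω in shell n, ENNReal.ofReal (Y ω ^ β) ∂μ := ENNReal.tsum_le_tsum fun n => by
          by_cases hn : 1 ≤ c / 2 ^ (n + 1)
          · simp only [slice, iUnion_eq_if, if_pos hn]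
            exact hT.measure_preimage_Ico_zpow_inter_le hm hY hC hβ hc hn
          · simp only [slice, iUnion_eq_if, if_neg hn, measure_empty, zero_le]
      _ ≤ ENNReal.ofReal (C * 2 ^ β * c ^ (-β)) * I := by
          rw [ENNReal.tsum_mul_left]
          exact mul_le_mul_right hshells _
  calc μ {ω | c < T ω * Y ω} ≤ μ {ω | c / 2 < Y ω} + μ (⋃ n, slice n) :=
        (measure_mono hcover).trans (measure_union_le _ _)
    _ ≤ ENNReal.ofReal ((c / 2) ^ (-β)) * I + ENNReal.ofReal (C * 2 ^ β * c ^ (-β)) * I :=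
        add_le_add (measure_lt_le_rpow_neg_mul_lintegral_rpow hYm (by positivity) hβ) hslices
    _ = ENNReal.ofReal ((1 + C) * 2 ^ β * c ^ (-β)) * I := by
        rw [← add_mul, ← ENNReal.ofReal_add (by positivity) (by positivity),
          Real.div_rpow hc.le zero_le_two, Real.rpow_neg zero_le_two, div_inv_eq_mul]
        ring_nf

lemma CondPowerTail.measure_mul_rpow_lt_le {T W : Ω → ℝ} {C β γ s : ℝ}
    (hT : CondPowerTail m μ T C β) (hm : m ≤ m0) (hW : Measurable[m] W) (hW0 : ∀ ω, 0 ≤ W ω)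
    (hC : 0 ≤ C) (hγ : 0 < γ) (hγβ : γ < β) (hs : 0 < s) :
    μ {ω | s * W ω ^ (1 - γ / β) < W ω * T ω}
      ≤ ENNReal.ofReal ((1 + C) * 2 ^ β * s ^ (-β)) * ∫⁻ ω, ENNReal.ofReal (W ω ^ γ) ∂μ := by
  have hβ : 0 < β := hγ.trans hγβ
  have hpow : ∀ ω, (W ω ^ (γ / β)) ^ β = W ω ^ γ := fun ω => by
    rw [← Real.rpow_mul (hW0 ω), div_mul_cancel₀ _ hβ.ne']
  calc μ {ω | s * W ω ^ (1 - γ / β) < W ω * T ω}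
      ≤ μ {ω | s < T ω * W ω ^ (γ / β)} := measure_mono fun ω hω =>
        lt_mul_rpow_of_mul_rpow_one_sub_lt (hW0 ω) ((div_lt_one hβ).2 hγβ) hω
    _ ≤ _ := by
        simpa only [hpow] using hT.measure_lt_mul_le hm (hW.pow_const (γ / β))
          (fun ω => Real.rpow_nonneg (hW0 ω) _) hC hβ hs

lemma CondPowerTail.measure_half_pow_mul_rpow_lt_le {T W : Ω → ℝ} {C β γ t : ℝ}
    (hT : CondPowerTail m μ T C β) (hm : m ≤ m0) (hW : Measurable[m] W) (hW0 : ∀ ω, 0 ≤ W ω)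
    (hC : 0 ≤ C) (hγ : 0 < γ) (hγβ : γ < β) (ht : 0 < t) {k : ℕ}
    (hmoment : ∫⁻ ω, ENNReal.ofReal (W ω ^ γ) ∂μ ≤ ENNReal.ofReal ((4 : ℝ) ^ (-β)) ^ k) :
    μ {ω | t * ((1 / 2) ^ k * W ω ^ (1 - γ / β)) < W ω * T ω}
      ≤ ENNReal.ofReal ((1 + C) * 2 ^ β * t ^ (-β)) * ENNReal.ofReal ((2 : ℝ) ^ (-β)) ^ k := by
  simp_rw [← mul_assoc]
  calc _ ≤ ENNReal.ofReal ((1 + C) * 2 ^ β * (t * (1 / 2) ^ k) ^ (-β))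
          * ENNReal.ofReal ((4 : ℝ) ^ (-β)) ^ k :=
        (hT.measure_mul_rpow_lt_le hm hW hW0 hC hγ hγβ (by positivity)).trans
          (mul_le_mul_right hmoment _)
    _ = _ := ofReal_mul_rpow_neg_mul_half_pow ht k

end MeasureTheory

section DiscountedProduct

variable {Ω : Type*}

def discountedProd (ε : ℝ) (X : ℕ → Ω → ℝ) (k : ℕ) (ω : Ω) : ℝ :=
  ε ^ k * ∏ j ∈ Finset.Icc 1 k, X j ω

variable {ε : ℝ} {X : ℕ → Ω → ℝ}

@[simp]
lemma discountedProd_zero (ω : Ω) : discountedProd ε X 0 ω = 1 := by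
  simp [discountedProd]

lemma discountedProd_succ (k : ℕ) (ω : Ω) :
    discountedProd ε X (k + 1) ω = ε * (discountedProd ε X k ω * X (k + 1) ω) := by
  rw [discountedProd, discountedProd, Finset.prod_Icc_succ_top (Nat.le_add_left 1 k), pow_succ]
  ring

lemma discountedProd_nonneg (hε : 0 ≤ ε) (hX : ∀ i ω, 0 ≤ X (i + 1) ω) (k : ℕ) (ω : Ω) :
    0 ≤ discountedProd ε X k ω := by
  induction k with
  | zero => simp
  | succ k ih =>
    rw [discountedProd_succ]
    exact mul_nonneg hε (mul_nonneg ih (hX k ω))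

lemma measurable_discountedProd {m0 : MeasurableSpace Ω} {ℱ : Filtration ℕ m0}
    (hX : ∀ i, Measurable[ℱ (i + 1)] (X (i + 1))) (k : ℕ) :
    Measurable[ℱ k] (discountedProd ε X k) := by
  induction k with
  | zero =>
    rw [funext (discountedProd_zero (ε := ε) (X := X))]
    exact measurable_const
  | succ k ih =>
    rw [funext (discountedProd_succ (ε := ε) (X := X) k)]
    exact measurable_const.mul ((ih.mono (ℱ.mono k.le_succ) le_rfl).mul (hX k))

end DiscountedProduct

lemma lintegral_discountedProd_rpow_le {Ω : Type*} {m0 : MeasurableSpace Ω} {μ : Measure Ω}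
    [IsProbabilityMeasure μ] {ℱ : Filtration ℕ m0} {X : ℕ → Ω → ℝ} {ε C α γ : ℝ}
    (hX : ∀ i, Measurable[ℱ (i + 1)] (X (i + 1))) (hX0 : ∀ i ω, 0 ≤ X (i + 1) ω)
    (htail : ∀ i, CondPowerTail (ℱ i) μ (X (i + 1)) C α) (hε : 0 ≤ ε) (hC : 0 ≤ C)
    (hγ : 0 < γ) (hγα : γ < α) (k : ℕ) :
    ∫⁻ ω, ENNReal.ofReal (discountedProd ε X k ω ^ γ) ∂μ
      ≤ ENNReal.ofReal (ε ^ γ * (1 + γ * C / (α - γ))) ^ k := by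
  induction k with
  | zero => simp [Real.one_rpow]
  | succ k ih =>
    have hWm : Measurable[ℱ k] fun ω => ENNReal.ofReal (discountedProd ε X k ω ^ γ) :=
      ((measurable_discountedProd hX k).pow_const γ).ennreal_ofReal
    have hXm : Measurable (X (k + 1)) := (hX k).mono (ℱ.le _) le_rfl
    calc ∫⁻ ω, ENNReal.ofReal (discountedProd ε X (k + 1) ω ^ γ) ∂μ
        = ENNReal.ofReal (ε ^ γ) * ∫⁻ ω, ENNReal.ofReal (discountedProd ε X k ω ^ γ) *
            ENNReal.ofReal (X (k + 1) ω ^ γ) ∂μ := by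
          rw [← lintegral_const_mul' _ _ ENNReal.ofReal_ne_top]
          refine lintegral_congr fun ω => ?_
          have hW0 := discountedProd_nonneg hε hX0 k ω
          rw [discountedProd_succ, Real.mul_rpow hε (mul_nonneg hW0 (hX0 k ω)),
            Real.mul_rpow hW0 (hX0 k ω), ENNReal.ofReal_mul (by positivity),
            ENNReal.ofReal_mul (by positivity)]
      _ ≤ ENNReal.ofReal (ε ^ γ) * (ENNReal.ofReal (1 + γ * C / (α - γ)) *
            ∫⁻ ω, ENNReal.ofReal (discountedProd ε X k ω ^ γ) ∂μ) :=
          mul_le_mul_right ((htail k).lintegral_mul_rpow_le (ℱ.le k) hXm (hX0 k) hC hγ hγα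
            hWm) _
      _ ≤ ENNReal.ofReal (ε ^ γ * (1 + γ * C / (α - γ))) ^ (k + 1) := by
          rw [← mul_assoc, ← ENNReal.ofReal_mul (by positivity), pow_succ']
          exact mul_le_mul_right ih _

theorem stmt3_general {Ω : Type*} {m0 : MeasurableSpace Ω} (μ : Measure Ω) [IsProbabilityMeasure μ]
    (ℱ : Filtration ℕ m0) (X τ : ℕ → Ω → ℝ)
    (hXmeas : ∀ i : ℕ, StronglyMeasurable[ℱ (i + 1)] (X (i + 1)))
    (hτmeas : ∀ i : ℕ, StronglyMeasurable[ℱ (i + 1)] (τ (i + 1)))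
    (hX0 : ∀ (i : ℕ) (ω : Ω), 0 ≤ X (i + 1) ω)
    (Cα Cβ α β : ℝ) (hCα : 0 < Cα) (hCβ : 0 < Cβ) (hβ : 0 < β)
    (hXtail : ∀ i : ℕ, ∀ x : ℝ, 1 ≤ x →
      ∀ᵐ ω ∂μ,
        (μ[Set.indicator {ω' | x < X (i + 1) ω'} (fun _ => (1 : ℝ)) | ℱ i]) ω ≤ Cα * x ^ (-α))
    (hτtail : ∀ i : ℕ, ∀ t : ℝ, 1 ≤ t →
      ∀ᵐ ω ∂μ,
        (μ[Set.indicator {ω' | t < τ (i + 1) ω'} (fun _ => (1 : ℝ)) | ℱ i]) ω ≤ Cβ * t ^ (-β))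
    (γ : ℝ) (hγ0 : 0 < γ) (hγ : γ < min α β)
    (ε₀ : ℝ) (hε₀pos : 0 < ε₀)
    (hε₀ : ε₀ * (1 + γ * Cα / (α - γ)) ^ (1 / γ) = (4 : ℝ) ^ (-β / γ)) :
    ∃ C' > (0 : ℝ), ∀ t : ℝ, 1 ≤ t →
      μ {ω |
          ENNReal.ofReal t *
              ∑' k : ℕ,
                ENNReal.ofReal
                  ((1 / 2 : ℝ) ^ k *
                    (ε₀ ^ k * ∏ j ∈ Finset.Icc 1 k, X j ω) ^ (1 - γ / β)) <
            ∑' k : ℕ,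
              ENNReal.ofReal (ε₀ ^ k * (∏ j ∈ Finset.Icc 1 k, X j ω) * τ (k + 1) ω)}
        ≤ ENNReal.ofReal (C' * t ^ (-β)) := by
  have hγα : γ < α := hγ.trans_le (min_le_left _ _)
  have hγβ : γ < β := hγ.trans_le (min_le_right _ _)
  have hXm : ∀ i, Measurable[ℱ (i + 1)] (X (i + 1)) := fun i => (hXmeas i).measurable
  have hXcond : ∀ i, CondPowerTail (ℱ i) μ (X (i + 1)) Cα α := fun i =>
    condPowerTail_of_condExp (ℱ.le i) ((hXm i).mono (ℱ.le _) le_rfl) hCα.le (hXtail i)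
  have hτcond : ∀ i, CondPowerTail (ℱ i) μ (τ (i + 1)) Cβ β := fun i =>
    condPowerTail_of_condExp (ℱ.le i) ((hτmeas i).measurable.mono (ℱ.le _) le_rfl) hCβ.le
      (hτtail i)
  have hmoment (k : ℕ) : ∫⁻ ω, ENNReal.ofReal (discountedProd ε₀ X k ω ^ γ) ∂μ
      ≤ ENNReal.ofReal ((4 : ℝ) ^ (-β)) ^ k := by
    rw [← rpow_mul_eq_of_mul_rpow_one_div_eq hε₀pos.le (by positivity) (by norm_num) hγ0.ne' hε₀]
    exact lintegral_discountedProd_rpow_le hXm hX0 hXcond hε₀pos.le hCα.le hγ0 hγα k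
  refine ⟨(1 + Cβ) * 2 ^ β / (1 - 2 ^ (-β)), ?_, fun t ht => ?_⟩
  · have := Real.rpow_lt_one_of_one_lt_of_neg one_lt_two (neg_neg_of_pos hβ)
    exact div_pos (by positivity) (by linarith)
  have ht0 : 0 < t := zero_lt_one.trans_le ht
  calc _ ≤ μ (⋃ k, {ω | t * ((1 / 2) ^ k * discountedProd ε₀ X k ω ^ (1 - γ / β))
          < discountedProd ε₀ X k ω * τ (k + 1) ω}) := measure_mono fun ω hω =>
        mem_iUnion.2 (exists_mul_lt_of_ofReal_mul_tsum_lt ht0.le hω)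
    _ ≤ ∑' k, ENNReal.ofReal ((1 + Cβ) * 2 ^ β * t ^ (-β)) * ENNReal.ofReal ((2 : ℝ) ^ (-β)) ^ k :=
        (measure_iUnion_le _).trans (ENNReal.tsum_le_tsum fun k =>
          (hτcond k).measure_half_pow_mul_rpow_lt_le (ℱ.le k) (measurable_discountedProd hXm k)
            (discountedProd_nonneg hε₀pos.le hX0 k) hCβ.le hγ0 hγβ ht0 (hmoment k))
    _ = _ := by
        rw [tsum_ofReal_mul_rpow_two_neg_pow (by positivity) hβ]
        congr 1
        ring

/-- With the conditional tail bounds of Lemma 2.4 for `X_i` and `τ_i`, fix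
`0 < γ < min α β` and let `ε₀ > 0` satisfy `ε₀ (1 + γ C_α/(α-γ))^{1/γ} = 4^{-β/γ}`.
Then there is `C' > 0` (depending only on `β` and `C_β`) such that for `t ≥ 1`,
`P( Σ_{k=0}^∞ ε₀^k Π_k τ_{k+1} > t Σ_{k=0}^∞ 2^{-k}(ε₀^k Π_k)^{1-γ/β} ) ≤ C' t^{-β}`,
with the event failing wherever the right-hand series is infinite (both series are
formalized in `ℝ≥0∞`, where `t · ∞ = ∞` makes the strict inequality false). -/
theorem stmt3 {Ω : Type*} {m0 : MeasurableSpace Ω} (μ : Measure Ω) [IsProbabilityMeasure μ]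
    (ℱ : Filtration ℕ m0) (X τ : ℕ → Ω → ℝ)
    (hXmeas : ∀ i : ℕ, StronglyMeasurable[ℱ (i + 1)] (X (i + 1)))
    (hτmeas : ∀ i : ℕ, StronglyMeasurable[ℱ (i + 1)] (τ (i + 1)))
    (hX0 : ∀ (i : ℕ) (ω : Ω), 0 ≤ X (i + 1) ω)
    (hτ0 : ∀ (i : ℕ) (ω : Ω), 0 ≤ τ (i + 1) ω)
    (Cα Cβ α β : ℝ) (hCα : 0 < Cα) (hCβ : 0 < Cβ) (hα : 0 < α) (hβ : 0 < β)
    (hXtail : ∀ i : ℕ, ∀ x : ℝ, 1 ≤ x →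
      ∀ᵐ ω ∂μ,
        (μ[Set.indicator {ω' | x < X (i + 1) ω'} (fun _ => (1 : ℝ)) | ℱ i]) ω ≤ Cα * x ^ (-α))
    (hτtail : ∀ i : ℕ, ∀ t : ℝ, 1 ≤ t →
      ∀ᵐ ω ∂μ,
        (μ[Set.indicator {ω' | t < τ (i + 1) ω'} (fun _ => (1 : ℝ)) | ℱ i]) ω ≤ Cβ * t ^ (-β))
    (γ : ℝ) (hγ0 : 0 < γ) (hγ : γ < min α β)
    (ε₀ : ℝ) (hε₀pos : 0 < ε₀)
    (hε₀ : ε₀ * (1 + γ * Cα / (α - γ)) ^ (1 / γ) = (4 : ℝ) ^ (-β / γ)) :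
    ∃ C' > (0 : ℝ), ∀ t : ℝ, 1 ≤ t →
      μ {ω |
          ENNReal.ofReal t *
              ∑' k : ℕ,
                ENNReal.ofReal
                  ((1 / 2 : ℝ) ^ k *
                    (ε₀ ^ k * ∏ j ∈ Finset.Icc 1 k, X j ω) ^ (1 - γ / β)) <
            ∑' k : ℕ,
              ENNReal.ofReal (ε₀ ^ k * (∏ j ∈ Finset.Icc 1 k, X j ω) * τ (k + 1) ω)}
        ≤ ENNReal.ofReal (C' * t ^ (-β)) :=
  stmt3_general μ ℱ X τ hXmeas hτmeas hX0 Cα Cβ α β hCα hCβ hβ hXtail hτtail γ hγ0 hγ ε₀ hε₀pos hε₀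
end

section
/- Suppose there are constants C > 0, α > 0, β > 0 (not depending on ε) and some ε ∈ (0,1) such that for all real M ≥ 1, P( sup_{0 ≤ t ≤ τ} |Y_t| ≥ M ) ≤ C M^{-α}, and for all real t ≥ ε, P( τ ≥ t ) ≤ C (ε/t)^{β}. Then, with γ'' = (min{α, β, 2})/8, there is a constant C' > 0 depending only on C, α, β (not on ε) such that for all real x ≥ ε^{1/2}, P( sup_{0 ≤ t ≤ τ} | ∫_0^t Y_s ds | ≥ x ) ≤ C' (ε/x²)^{γ''}. -/
/-!
Off the event `{sup_{t ≤ τ} |Y_t| ≥ M} ∪ {τ ≥ T}` every `|∫_0^t Y_s ds|` with `t ≤ τ` is at most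
`M τ < M T`, so as soon as `M T ≤ x` the tail of the running integral is bounded by
`C M^{-α} + C (ε/T)^β`. With `q = ε/x² ≤ 1`, the cutoffs `M = q^{-γ/α}` and `T = ε q^{-γ/β}` make
both terms equal to `C q^γ`, and `M T = ε q^{-(γ/α + γ/β)} ≤ ε q^{-1/2} = √ε x ≤ x` because
`γ/α + γ/β ≤ 1/2`.
-/

open MeasureTheory Set

theorem iSup_abs_integral_Ioc_le {f : ℝ → ℝ} {a M : ℝ} (hM : 0 ≤ M)
    (hf : ⨆ t ∈ Icc (0 : ℝ) a, ENNReal.ofReal |f t| ≤ ENNReal.ofReal M) :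
    ⨆ t ∈ Icc (0 : ℝ) a, ENNReal.ofReal |∫ s in Ioc (0 : ℝ) t, f s| ≤ ENNReal.ofReal (M * a) := by
  refine iSup₂_le fun t ht => ENNReal.ofReal_le_ofReal ?_
  have hbound : ∀ s ∈ Ioc 0 t, ‖f s‖ ≤ M := fun s hs =>
    (ENNReal.ofReal_le_ofReal_iff hM).1 <|
      (le_iSup₂ (f := fun t _ => ENNReal.ofReal |f t|) s ⟨hs.1.le, hs.2.trans ht.2⟩).trans hf
  calc |∫ s in Ioc 0 t, f s| ≤ M * volume.real (Ioc 0 t) :=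
        norm_setIntegral_le_of_norm_le_const measure_Ioc_lt_top hbound
    _ = M * t := by rw [Real.volume_real_Ioc_of_le ht.1, sub_zero]
    _ ≤ M * a := mul_le_mul_of_nonneg_left ht.2 hM

theorem setOf_le_iSup_abs_integral_subset {Ω : Type*} (Y : ℝ → Ω → ℝ) (τ : Ω → ℝ) {x M T : ℝ}
    (hM : 0 < M) (hx : 0 < x) (hMT : M * T ≤ x) :
    {ω | ENNReal.ofReal x ≤ ⨆ t ∈ Icc (0 : ℝ) (τ ω), ENNReal.ofReal |∫ s in Ioc (0 : ℝ) t, Y s ω|} ⊆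
      {ω | ENNReal.ofReal M ≤ ⨆ t ∈ Icc (0 : ℝ) (τ ω), ENNReal.ofReal |Y t ω|} ∪
        {ω | T ≤ τ ω} := by
  intro ω hω
  by_contra h
  simp only [mem_union, mem_ofPred_eq, not_or, not_le] at h
  obtain ⟨hY, hτ⟩ := h
  have hMτ : M * τ ω < x := (mul_lt_mul_of_pos_left hτ hM).trans_le hMT
  exact ((iSup_abs_integral_Ioc_le hM.le hY.le).trans_lt
    ((ENNReal.ofReal_lt_ofReal_iff hx).2 hMτ)).not_ge hω

theorem measure_le_iSup_abs_integral_le_add {Ω : Type*} {m0 : MeasurableSpace Ω} (μ : Measure Ω)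
    (Y : ℝ → Ω → ℝ) (τ : Ω → ℝ) {x M T : ℝ} (hM : 0 < M) (hx : 0 < x) (hMT : M * T ≤ x) :
    μ {ω | ENNReal.ofReal x ≤ ⨆ t ∈ Icc (0 : ℝ) (τ ω), ENNReal.ofReal |∫ s in Ioc (0 : ℝ) t, Y s ω|} ≤
      μ {ω | ENNReal.ofReal M ≤ ⨆ t ∈ Icc (0 : ℝ) (τ ω), ENNReal.ofReal |Y t ω|} +
        μ {ω | T ≤ τ ω} :=
  (measure_mono (setOf_le_iSup_abs_integral_subset Y τ hM hx hMT)).trans (measure_union_le _ _)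

theorem div_sq_eq_rpow_two {ε x : ℝ} (hε : 0 ≤ ε) (hx : 0 ≤ x) :
    ε / x ^ 2 = (ε ^ (1 / 2 : ℝ) / x) ^ (2 : ℝ) := by
  rw [Real.div_rpow (by positivity) hx, ← Real.rpow_mul hε, Real.rpow_two]
  norm_num

theorem mul_div_sq_rpow_neg_le {ε x s : ℝ} (hε0 : 0 < ε) (hε1 : ε ≤ 1)
    (hx : ε ^ (1 / 2 : ℝ) ≤ x) (hs : s ≤ 1 / 2) : ε * (ε / x ^ 2) ^ (-s) ≤ x := by
  have he : 0 < ε ^ (1 / 2 : ℝ) := by positivity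
  have hx0 : 0 < x := he.trans_le hx
  have hq0 : 0 < ε ^ (1 / 2 : ℝ) / x := by positivity
  have hq1 : ε ^ (1 / 2 : ℝ) / x ≤ 1 := (div_le_one hx0).2 hx
  have hεe : ε ^ (1 / 2 : ℝ) * ε ^ (1 / 2 : ℝ) = ε := by
    rw [← Real.rpow_add hε0]; norm_num
  calc ε * (ε / x ^ 2) ^ (-s) = ε * (ε ^ (1 / 2 : ℝ) / x) ^ (2 * -s) := by
        rw [div_sq_eq_rpow_two hε0.le hx0.le, ← Real.rpow_mul hq0.le]
    _ ≤ ε * (ε ^ (1 / 2 : ℝ) / x) ^ (-1 : ℝ) :=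
        mul_le_mul_of_nonneg_left (Real.rpow_le_rpow_of_exponent_ge hq0 hq1 (by linarith)) hε0.le
    _ = ε ^ (1 / 2 : ℝ) * x := by
        rw [Real.rpow_neg_one, inv_div]
        field_simp
        rw [sq, hεe]
    _ ≤ x := mul_le_of_le_one_left hx0.le (Real.rpow_le_one hε0.le hε1 (by norm_num))

theorem rpow_rpow_div_cancel {q : ℝ} (a : ℝ) {p : ℝ} (hq : 0 ≤ q) (hp : p ≠ 0) :
    (q ^ (a / p)) ^ p = q ^ a := by
  rw [← Real.rpow_mul hq, div_mul_cancel₀ a hp]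

theorem exists_balanced_cutoffs {ε x α β γ : ℝ} (hε0 : 0 < ε) (hε1 : ε ≤ 1)
    (hx : ε ^ (1 / 2 : ℝ) ≤ x) (hα : 0 < α) (hβ : 0 < β) (hγ : 0 ≤ γ)
    (hγα : 4 * γ ≤ α) (hγβ : 4 * γ ≤ β) :
    ∃ M T : ℝ, 1 ≤ M ∧ ε ≤ T ∧ M * T ≤ x ∧
      M ^ (-α) = (ε / x ^ 2) ^ γ ∧ (ε / T) ^ β = (ε / x ^ 2) ^ γ := by
  have hx0 : 0 < x := (Real.rpow_pos_of_pos hε0 _).trans_le hx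
  have hq1 : ε / x ^ 2 ≤ 1 := by
    rw [div_sq_eq_rpow_two hε0.le hx0.le]
    exact Real.rpow_le_one (by positivity) ((div_le_one hx0).2 hx) zero_le_two
  set q := ε / x ^ 2
  have hq0 : 0 < q := by positivity
  have hexp : γ / α + γ / β ≤ 1 / 2 := by
    have h₁ : γ / α ≤ 1 / 4 := (div_le_iff₀ hα).2 (by linarith)
    have h₂ : γ / β ≤ 1 / 4 := (div_le_iff₀ hβ).2 (by linarith)
    linarith
  refine ⟨q ^ (γ / -α), ε / q ^ (γ / β), ?_, ?_, ?_, ?_, ?_⟩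
  · exact Real.one_le_rpow_of_pos_of_le_one_of_nonpos hq0 hq1
      (div_nonpos_of_nonneg_of_nonpos hγ (neg_nonpos.2 hα.le))
  · exact le_div_self hε0.le (by positivity) (Real.rpow_le_one hq0.le hq1 (by positivity))
  · calc q ^ (γ / -α) * (ε / q ^ (γ / β)) = ε * q ^ (-(γ / α + γ / β)) := by
          rw [neg_add, Real.rpow_add hq0, Real.rpow_neg hq0.le (γ / β), div_neg]; ring
      _ ≤ x := mul_div_sq_rpow_neg_le hε0 hε1 hx hexp
  · exact rpow_rpow_div_cancel γ hq0.le (neg_ne_zero.2 hα.ne')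
  · rw [div_div_cancel₀ hε0.ne', rpow_rpow_div_cancel γ hq0.le hβ.ne']

theorem stmt5_general {Ω : Type*} {m0 : MeasurableSpace Ω} (μ : Measure Ω)
    (Y : ℝ → Ω → ℝ) (τ : Ω → ℝ)
    (C α β : ℝ) (hC : 0 < C) (hα : 0 < α) (hβ : 0 < β) :
    ∃ C' > (0 : ℝ), ∀ ε : ℝ, 0 < ε → ε < 1 →
      (∀ M : ℝ, 1 ≤ M →
        μ {ω | ENNReal.ofReal M ≤ ⨆ t ∈ Set.Icc (0 : ℝ) (τ ω), ENNReal.ofReal |Y t ω|}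
          ≤ ENNReal.ofReal (C * M ^ (-α))) →
      (∀ t : ℝ, ε ≤ t → μ {ω | t ≤ τ ω} ≤ ENNReal.ofReal (C * (ε / t) ^ β)) →
      ∀ x : ℝ, ε ^ ((1 : ℝ) / 2) ≤ x →
        μ {ω | ENNReal.ofReal x ≤
            ⨆ t ∈ Set.Icc (0 : ℝ) (τ ω), ENNReal.ofReal |∫ s in Set.Ioc (0 : ℝ) t, Y s ω|}
          ≤ ENNReal.ofReal (C' * (ε / x ^ 2) ^ (min (min α β) 2 / 8)) := by
  refine ⟨2 * C, by positivity, fun ε hε0 hε1 hY_tail hτ_tail x hx => ?_⟩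
  have hγα : 4 * (min (min α β) 2 / 8) ≤ α := by
    linarith [min_le_left (min α β) 2, min_le_left α β]
  have hγβ : 4 * (min (min α β) 2 / 8) ≤ β := by
    linarith [min_le_left (min α β) 2, min_le_right α β]
  obtain ⟨M, T, hM, hT, hMT, hMα, hTβ⟩ :=
    exists_balanced_cutoffs hε0 hε1.le hx hα hβ (by positivity) hγα hγβ
  calc _ ≤ _ := measure_le_iSup_abs_integral_le_add μ Y τ (by linarith)
        ((Real.rpow_pos_of_pos hε0 _).trans_le hx) hMT
    _ ≤ ENNReal.ofReal (C * M ^ (-α)) + ENNReal.ofReal (C * (ε / T) ^ β) :=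
        add_le_add (hY_tail M hM) (hτ_tail T hT)
    _ = _ := by
        rw [hMα, hTβ, ← ENNReal.ofReal_add (by positivity) (by positivity)]
        ring_nf

/-- Lemma 2.3 (i), time-integral assertion: Let `Y` be a progressively
measurable real process and `τ` an (a.s. finite, nonnegative, real-valued) stopping time.
Suppose there exist constants `C, α, β > 0` (not depending on `ε`) and some `ε ∈ (0,1)` with
`P(sup_{t ≤ τ} |Y_t| ≥ M) ≤ C M^{-α}` for all `M ≥ 1` and `P(τ ≥ t) ≤ C (ε/t)^β` for all
`t ≥ ε`. Then, with `γ'' = (min {α, β, 2})/8`, there is `C' > 0` depending only on `C, α, β`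
(in particular not on `ε`) such that for all `x ≥ ε^{1/2}`,
`P(sup_{t ≤ τ} |∫_0^t Y_s ds| ≥ x) ≤ C' (ε/x²)^{γ''}`.
(Suprema over the random interval `[0, τ]` are taken in `ℝ≥0∞` via `ENNReal.ofReal`.) -/
theorem stmt5 {Ω : Type*} {m0 : MeasurableSpace Ω} (μ : Measure Ω) [IsProbabilityMeasure μ]
    (ℱ : Filtration ℝ m0) (Y : ℝ → Ω → ℝ) (τ : Ω → ℝ)
    (hY : ProgMeasurable ℱ Y) (hτ : IsStoppingTime ℱ (fun ω => (τ ω : WithTop ℝ))) (hτ0 : ∀ ω, 0 ≤ τ ω)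
    (C α β : ℝ) (hC : 0 < C) (hα : 0 < α) (hβ : 0 < β) :
    ∃ C' > (0 : ℝ), ∀ ε : ℝ, 0 < ε → ε < 1 →
      (∀ M : ℝ, 1 ≤ M →
        μ {ω | ENNReal.ofReal M ≤ ⨆ t ∈ Set.Icc (0 : ℝ) (τ ω), ENNReal.ofReal |Y t ω|}
          ≤ ENNReal.ofReal (C * M ^ (-α))) →
      (∀ t : ℝ, ε ≤ t → μ {ω | t ≤ τ ω} ≤ ENNReal.ofReal (C * (ε / t) ^ β)) →
      ∀ x : ℝ, ε ^ ((1 : ℝ) / 2) ≤ x →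
        μ {ω | ENNReal.ofReal x ≤
            ⨆ t ∈ Set.Icc (0 : ℝ) (τ ω), ENNReal.ofReal |∫ s in Set.Ioc (0 : ℝ) t, Y s ω|}
          ≤ ENNReal.ofReal (C' * (ε / x ^ 2) ^ (min (min α β) 2 / 8)) :=
  stmt5_general (m0 := m0) μ Y τ C α β hC hα hβ
end

section
/- Suppose there are constants C > 0, α > 0, β > 0 (not depending on ε) and some ε ∈ (0,1] such that for all real M ≥ ε, P( sup_{0 ≤ t ≤ τ} |Y_t| ≥ M ) ≤ C (ε/M)^{α}, and for all real t ≥ 1, P( τ ≥ t ) ≤ C t^{-β}. Then, with γ'' = (min{α, β, 2})/8, there is a constant C' > 0 depending only on C, α, β (not on ε) such that for all real x ≥ ε^{1/2}, P( sup_{0 ≤ t ≤ τ} | ∫_0^t Y_s ds | ≥ x ) ≤ C' (ε/x²)^{γ''}. -/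
/-!
On the event `{τ < T} ∩ {sup_{t ≤ τ} |Y_t| < K}` the time integral stays below `K τ < K T`,
so `P(sup |∫ Y| ≥ K T) ≤ P(τ ≥ T) + P(sup |Y| ≥ K)`. Writing `q = (ε/x²)^{1/4} ≤ 1` and taking
`T = q⁻¹`, `K = x q`, the two tails are at most `C q^β` and `C (ε/(x q))^α ≤ C q^α`, because
`ε ≤ √ε = x q²`; both are bounded by `C q^{4γ''} = C (ε/x²)^{γ''}`.
-/

open MeasureTheory Set

lemma iSup_abs_setIntegral_Ioc_le_mul (f : ℝ → ℝ) {K a : ℝ}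
    (hf : ∀ t ∈ Icc 0 a, |f t| ≤ K) :
    ⨆ t ∈ Icc (0 : ℝ) a, ENNReal.ofReal |∫ s in Ioc (0 : ℝ) t, f s| ≤ ENNReal.ofReal (K * a) := by
  refine iSup₂_le fun t ht => ENNReal.ofReal_le_ofReal ?_
  have hK : 0 ≤ K := (abs_nonneg _).trans (hf t ht)
  have hbound : ‖∫ s in Ioc (0 : ℝ) t, f s‖ ≤ K * volume.real (Ioc (0 : ℝ) t) :=
    norm_setIntegral_le_of_norm_le_const (by simp) fun s hs => hf s ⟨hs.1.le, hs.2.trans ht.2⟩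
  rw [Real.norm_eq_abs, Real.volume_real_Ioc_of_le ht.1, sub_zero] at hbound
  exact hbound.trans (mul_le_mul_of_nonneg_left ht.2 hK)

lemma setOf_le_iSup_abs_setIntegral_subset {Ω : Type*} (Y : ℝ → Ω → ℝ) (τ : Ω → ℝ) {K T : ℝ}
    (hK : 0 < K) (hT : 0 < T) :
    {ω | ENNReal.ofReal (K * T) ≤
        ⨆ t ∈ Icc (0 : ℝ) (τ ω), ENNReal.ofReal |∫ s in Ioc (0 : ℝ) t, Y s ω|}
      ⊆ {ω | T ≤ τ ω} ∪
        {ω | ENNReal.ofReal K ≤ ⨆ t ∈ Icc (0 : ℝ) (τ ω), ENNReal.ofReal |Y t ω|} := by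
  intro ω hω
  by_contra hcon
  simp only [mem_union, mem_ofPred_eq, not_or, not_le] at hω hcon
  obtain ⟨hτT, hYK⟩ := hcon
  have hY : ∀ t ∈ Icc (0 : ℝ) (τ ω), |Y t ω| ≤ K := fun t ht =>
    (ENNReal.ofReal_lt_ofReal_iff hK).mp ((le_iSup₂ (f := fun t (_ : t ∈ Icc (0 : ℝ) (τ ω)) =>
      ENNReal.ofReal |Y t ω|) t ht).trans_lt hYK) |>.le
  have hKτ : K * T ≤ K * τ ω := by
    rcases ENNReal.ofReal_le_ofReal_iff'.mp (hω.trans (iSup_abs_setIntegral_Ioc_le_mul _ hY))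
      with h | h
    · exact h
    · exact absurd h (mul_pos hK hT).not_ge
  exact (mul_lt_mul_of_pos_left hτT hK).not_ge hKτ

lemma measure_le_iSup_abs_setIntegral_le {Ω : Type*} {m0 : MeasurableSpace Ω} (μ : Measure Ω)
    (Y : ℝ → Ω → ℝ) (τ : Ω → ℝ) {K T : ℝ} (hK : 0 < K) (hT : 0 < T) :
    μ {ω | ENNReal.ofReal (K * T) ≤
        ⨆ t ∈ Icc (0 : ℝ) (τ ω), ENNReal.ofReal |∫ s in Ioc (0 : ℝ) t, Y s ω|}
      ≤ μ {ω | T ≤ τ ω} +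
        μ {ω | ENNReal.ofReal K ≤ ⨆ t ∈ Icc (0 : ℝ) (τ ω), ENNReal.ofReal |Y t ω|} :=
  (measure_mono (setOf_le_iSup_abs_setIntegral_subset Y τ hK hT)).trans (measure_union_le _ _)

lemma le_mul_sq_of_pow_four_eq {ε x q : ℝ} (hε : 0 ≤ ε) (hε1 : ε ≤ 1) (hx : 0 < x)
    (hq4 : q ^ 4 = ε / x ^ 2) : ε ≤ x * q ^ 2 := by
  have hsq : (x * q ^ 2) ^ 2 = ε := by rw [mul_pow, ← pow_mul, hq4]; field_simp
  refine (pow_le_pow_iff_left₀ hε (by positivity) two_ne_zero).mp ?_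
  rw [hsq]; nlinarith

lemma div_sq_le_one_of_rpow_half_le {ε x : ℝ} (hε : 0 ≤ ε) (hx : ε ^ ((1 : ℝ) / 2) ≤ x) :
    ε / x ^ 2 ≤ 1 := by
  rw [← Real.sqrt_eq_rpow] at hx
  refine div_le_one_of_le₀ ?_ (sq_nonneg x)
  rw [← Real.sq_sqrt hε]
  exact pow_le_pow_left₀ (Real.sqrt_nonneg ε) hx 2

lemma inv_rpow_neg_le_rpow_of_le {q p β : ℝ} (hq0 : 0 < q) (hq1 : q ≤ 1) (hpβ : p ≤ β) :
    q⁻¹ ^ (-β) ≤ q ^ p := by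
  rw [Real.rpow_neg (inv_nonneg.mpr hq0.le), Real.inv_rpow hq0.le, inv_inv]
  exact Real.rpow_le_rpow_of_exponent_ge hq0 hq1 hpβ

theorem stmt6_general {Ω : Type*} {m0 : MeasurableSpace Ω} (μ : Measure Ω)
    (Y : ℝ → Ω → ℝ) (τ : Ω → ℝ)
    (C α β : ℝ) (hC : 0 < C) (hα : 0 < α) (hβ : 0 < β) :
    ∃ C' > (0 : ℝ), ∀ ε : ℝ, 0 < ε → ε ≤ 1 →
      (∀ M : ℝ, ε ≤ M →
        μ {ω | ENNReal.ofReal M ≤ ⨆ t ∈ Set.Icc (0 : ℝ) (τ ω), ENNReal.ofReal |Y t ω|}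
          ≤ ENNReal.ofReal (C * (ε / M) ^ α)) →
      (∀ t : ℝ, 1 ≤ t → μ {ω | t ≤ τ ω} ≤ ENNReal.ofReal (C * t ^ (-β))) →
      ∀ x : ℝ, ε ^ ((1 : ℝ) / 2) ≤ x →
        μ {ω | ENNReal.ofReal x ≤
            ⨆ t ∈ Set.Icc (0 : ℝ) (τ ω), ENNReal.ofReal |∫ s in Set.Ioc (0 : ℝ) t, Y s ω|}
          ≤ ENNReal.ofReal (C' * (ε / x ^ 2) ^ (min (min α β) 2 / 8)) := by
  refine ⟨2 * C, by positivity, fun ε hε hε1 hYtail hτtail x hx => ?_⟩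
  set γ := min (min α β) 2 / 8
  obtain ⟨hγα, hγβ⟩ : 4 * γ ≤ α ∧ 4 * γ ≤ β := by
    have := lt_min (lt_min hα hβ) two_pos; grind
  have hx0 : 0 < x := (Real.rpow_pos_of_pos hε _).trans_le hx
  have hu1 := div_sq_le_one_of_rpow_half_le hε.le hx
  set q := (ε / x ^ 2) ^ ((1 : ℝ) / 4)
  have hq0 : 0 < q := by positivity
  have hq1 : q ≤ 1 := Real.rpow_le_one (by positivity) hu1 (by norm_num)
  have hq4 : q ^ 4 = ε / x ^ 2 := by
    rw [← Real.rpow_natCast, ← Real.rpow_mul (by positivity)]; norm_num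
  have hεq := le_mul_sq_of_pow_four_eq hε.le hε1 hx0 hq4
  have hK : (ε / (x * q)) ^ α ≤ q ^ (4 * γ) := by
    refine (Real.rpow_le_rpow (by positivity) ?_ hα.le).trans
      (Real.rpow_le_rpow_of_exponent_ge hq0 hq1 hγα)
    rw [div_le_iff₀ (by positivity)]; linarith
  have hu : (ε / x ^ 2) ^ γ = q ^ (4 * γ) := by
    rw [← Real.rpow_mul (by positivity)]; ring_nf
  calc _ = μ {ω | ENNReal.ofReal (x * q * q⁻¹) ≤
            ⨆ t ∈ Icc (0 : ℝ) (τ ω), ENNReal.ofReal |∫ s in Ioc (0 : ℝ) t, Y s ω|} := by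
        rw [mul_inv_cancel_right₀ hq0.ne']
    _ ≤ _ := measure_le_iSup_abs_setIntegral_le μ Y τ (by positivity) (by positivity)
    _ ≤ ENNReal.ofReal (C * q⁻¹ ^ (-β)) + ENNReal.ofReal (C * (ε / (x * q)) ^ α) :=
        add_le_add (hτtail _ (one_le_inv₀ hq0 |>.mpr hq1))
          (hYtail _ (hεq.trans (by nlinarith)))
    _ ≤ ENNReal.ofReal (C * q ^ (4 * γ)) + ENNReal.ofReal (C * q ^ (4 * γ)) := by
        gcongr
        exact inv_rpow_neg_le_rpow_of_le hq0 hq1 hγβ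
    _ = ENNReal.ofReal (2 * C * (ε / x ^ 2) ^ γ) := by
        rw [← ENNReal.ofReal_add (by positivity) (by positivity), hu]; ring_nf

/-- Lemma 2.3 (ii), time-integral assertion: Let `Y` be a progressively
measurable real process and `τ` an (a.s. finite, nonnegative, real-valued) stopping time.
Suppose there exist constants `C, α, β > 0` (not depending on `ε`) and some `ε ∈ (0,1]` with
`P(sup_{t ≤ τ} |Y_t| ≥ M) ≤ C (ε/M)^α` for all `M ≥ ε` and `P(τ ≥ t) ≤ C t^{-β}` for all
`t ≥ 1`. Then, with `γ'' = (min {α, β, 2})/8`, there is `C' > 0` depending only on `C, α, β`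
(in particular not on `ε`) such that for all `x ≥ ε^{1/2}`,
`P(sup_{t ≤ τ} |∫_0^t Y_s ds| ≥ x) ≤ C' (ε/x²)^{γ''}`.
(Suprema over the random interval `[0, τ]` are taken in `ℝ≥0∞` via `ENNReal.ofReal`.) -/
theorem stmt6 {Ω : Type*} {m0 : MeasurableSpace Ω} (μ : Measure Ω) [IsProbabilityMeasure μ]
    (ℱ : Filtration ℝ m0) (Y : ℝ → Ω → ℝ) (τ : Ω → ℝ)
    (hY : ProgMeasurable ℱ Y) (hτ : IsStoppingTime ℱ (fun ω => (τ ω : WithTop ℝ))) (hτ0 : ∀ ω, 0 ≤ τ ω)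
    (C α β : ℝ) (hC : 0 < C) (hα : 0 < α) (hβ : 0 < β) :
    ∃ C' > (0 : ℝ), ∀ ε : ℝ, 0 < ε → ε ≤ 1 →
      (∀ M : ℝ, ε ≤ M →
        μ {ω | ENNReal.ofReal M ≤ ⨆ t ∈ Set.Icc (0 : ℝ) (τ ω), ENNReal.ofReal |Y t ω|}
          ≤ ENNReal.ofReal (C * (ε / M) ^ α)) →
      (∀ t : ℝ, 1 ≤ t → μ {ω | t ≤ τ ω} ≤ ENNReal.ofReal (C * t ^ (-β))) →
      ∀ x : ℝ, ε ^ ((1 : ℝ) / 2) ≤ x →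
        μ {ω | ENNReal.ofReal x ≤
            ⨆ t ∈ Set.Icc (0 : ℝ) (τ ω), ENNReal.ofReal |∫ s in Set.Ioc (0 : ℝ) t, Y s ω|}
          ≤ ENNReal.ofReal (C' * (ε / x ^ 2) ^ (min (min α β) 2 / 8)) :=
  stmt6_general (m0 := m0) μ Y τ C α β hC hα hβ
end

section
/- For any word I = (i₁, …, i_N) ∈ {1,2}^N of length N ≥ 2 with i_{N−1} = 1 and i_N = 2, the iterated Lie bracket satisfies, for all x ∈ ℝ^d, V_I(x) = Σ_{j=3}^d (∂₁^{n₁(I)−1} ∂₂^{n₂(I)−1} ψ_j)(x₁, x₂) e_j, where n₁(I) and n₂(I) denote the number of occurrences of 1 and of 2 in the word I, and ψ_j is the j-th component of ψ. -/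
/-!
A bracket `V_I` whose word ends in `(1, 2)` is a vertical field `Σ_{j ≥ 3} P_j(x₁, x₂) e_j`.
Bracketing `V_i` with such a field differentiates every `P_j` by `∂_i`: the derivative of the
vertical field along `V_i` only sees the `e_i`-component of `V_i`, while `DV_i` annihilates
vertical vectors because `V_i` depends on `x₁, x₂` alone. Starting from `[V₁, V₂] = ψ` and
using that partial derivatives commute gives the formula.
-/

open MvPolynomial

/-- Lie bracket of vector fields on ℝ^d: `[U,V](x) = DV(x)·U(x) − DU(x)·V(x)`. -/
noncomputable def lieBracketVF {d : ℕ} (U V : (Fin d → ℝ) → (Fin d → ℝ)) :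
    (Fin d → ℝ) → (Fin d → ℝ) :=
  fun x => fderiv ℝ V x (U x) - fderiv ℝ U x (V x)

/-- The driving vector fields `V_i(x) = e_i + Σ_{j ≥ 3} σ_{i,j}(x₁,x₂) e_j`, `i = 1,2`
(zero-based: `i : Fin 2`, components of `ℝ^d` indexed by `Fin d`, the "first two"
coordinates being indices `0, 1` and the remaining ones the indices `j ≥ 2`). -/
noncomputable def driftField (d : ℕ) (hd : 3 ≤ d)
    (σ : Fin 2 → Fin d → MvPolynomial (Fin 2) ℝ) (i : Fin 2) :
    (Fin d → ℝ) → (Fin d → ℝ) :=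
  fun x j =>
    (if (j : ℕ) = (i : ℕ) then 1 else 0) +
      (if 2 ≤ (j : ℕ) then
        MvPolynomial.eval (fun k : Fin 2 => x (Fin.castLE (by omega) k)) (σ i j)
      else 0)

/-- Right-nested iterated Lie bracket over a word `I ∈ {1,2}^N`:
`V_I = [V_{i₁}, [V_{i₂}, [... [V_{i_{N-1}}, V_{i_N}] ...]]]` (empty word ↦ 0). -/
noncomputable def wordBracket {d : ℕ} (V : Fin 2 → (Fin d → ℝ) → (Fin d → ℝ)) :
    List (Fin 2) → (Fin d → ℝ) → (Fin d → ℝ)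
  | [] => fun _ _ => 0
  | [i] => V i
  | i :: j :: l => lieBracketVF (V i) (wordBracket V (j :: l))

theorem MvPolynomial.pderiv_pderiv_comm {R ι : Type*} [CommSemiring R] (i j : ι)
    (p : MvPolynomial ι R) : pderiv i (pderiv j p) = pderiv j (pderiv i p) := by
  classical
  induction p using MvPolynomial.induction_on with
  | C a => simp
  | add p q hp hq => simp [hp, hq]
  | mul_X p k hp =>
    simp only [map_add, pderiv_mul, pderiv_X, hp, Pi.single_apply]
    split_ifs <;> simp [add_comm, add_left_comm]

theorem MvPolynomial.foldr_pderiv_eq_iterate {R : Type*} [CommSemiring R] (l : List (Fin 2))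
    (p : MvPolynomial (Fin 2) R) :
    l.foldr (fun i q => pderiv i q) p =
      (fun q => pderiv 0 q)^[l.count 0] ((fun q => pderiv 1 q)^[l.count 1] p) := by
  induction l with
  | nil => rfl
  | cons i l ih =>
    rw [List.foldr_cons, ih]
    obtain rfl | rfl : i = 0 ∨ i = 1 := by omega
    · simp only [List.count_cons_self, List.count_cons_of_ne (by decide : (0 : Fin 2) ≠ 1),
        Function.iterate_succ_apply']
    · have hcomm : Function.Commute (fun q : MvPolynomial (Fin 2) R => pderiv 0 q)
          (fun q => pderiv 1 q) := pderiv_pderiv_comm 0 1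
      simp only [List.count_cons_self, List.count_cons_of_ne (by decide : (1 : Fin 2) ≠ 0),
        Function.iterate_succ_apply', ← (hcomm.iterate_left _).eq]

theorem MvPolynomial.hasFDerivAt_eval {𝕜 ι : Type*} [NontriviallyNormedField 𝕜] [Fintype ι]
    (P : MvPolynomial ι 𝕜) (x : ι → 𝕜) :
    HasFDerivAt (fun y => eval y P)
      (∑ k, eval x (pderiv k P) • ContinuousLinearMap.proj (R := 𝕜) (φ := fun _ : ι => 𝕜) k) x := by
  classical
  induction P using MvPolynomial.induction_on with
  | C a =>
    simp only [eval_C]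
    refine (hasFDerivAt_const a x).congr_fderiv ?_
    ext
    simp
  | add p q hp hq =>
    simp only [map_add]
    refine (hp.add hq).congr_fderiv ?_
    ext
    simp [add_mul, Finset.sum_add_distrib]
  | mul_X p i hp =>
    simp only [map_mul, eval_X]
    refine (hp.mul (hasFDerivAt_apply i x)).congr_fderiv ?_
    ext v
    simp [pderiv_X, Pi.single_apply, apply_ite (eval x), add_mul, Finset.sum_add_distrib,
      Finset.mul_sum, mul_assoc]

lemma wordBracket_cons_of_ne_nil {d : ℕ} (V : Fin 2 → (Fin d → ℝ) → (Fin d → ℝ)) (i : Fin 2)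
    {w : List (Fin 2)} (hw : w ≠ []) :
    wordBracket V (i :: w) = lieBracketVF (V i) (wordBracket V w) := by
  obtain ⟨j, w, rfl⟩ := List.exists_cons_of_ne_nil hw
  rfl

section VerticalField

variable {d : ℕ} (h2 : 2 ≤ d)

noncomputable def verticalField (P : Fin d → MvPolynomial (Fin 2) ℝ) (x : Fin d → ℝ) : Fin d → ℝ :=
  fun j => if 2 ≤ (j : ℕ) then eval (fun k => x (Fin.castLE h2 k)) (P j) else 0

noncomputable def lowCoords : (Fin d → ℝ) →L[ℝ] (Fin 2 → ℝ) :=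
  ContinuousLinearMap.pi fun k =>
    ContinuousLinearMap.proj (R := ℝ) (φ := fun _ : Fin d => ℝ) (Fin.castLE h2 k)

lemma fderiv_verticalField_apply (P : Fin d → MvPolynomial (Fin 2) ℝ) (x v : Fin d → ℝ) :
    fderiv ℝ (verticalField h2 P) x v = fun j : Fin d => if 2 ≤ (j : ℕ) then
      ∑ k, eval (fun k => x (Fin.castLE h2 k)) (pderiv k (P j)) * v (Fin.castLE h2 k) else 0 := by
  have hcomp (j : Fin d) : HasFDerivAt (fun y => verticalField h2 P y j)
      (if 2 ≤ (j : ℕ) then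
        (∑ k, eval (lowCoords h2 x) (pderiv k (P j)) •
          ContinuousLinearMap.proj (R := ℝ) (φ := fun _ : Fin 2 => ℝ) k).comp (lowCoords h2)
      else 0) x := by
    unfold verticalField
    split_ifs
    · exact (hasFDerivAt_eval (P j) _).comp x (lowCoords h2).hasFDerivAt
    · exact hasFDerivAt_const 0 x
  rw [(hasFDerivAt_pi.2 hcomp).fderiv]
  ext j
  split_ifs <;> simp [*, lowCoords]

lemma verticalField_castLE (P : Fin d → MvPolynomial (Fin 2) ℝ) (x : Fin d → ℝ) (k : Fin 2) :
    verticalField h2 P x (Fin.castLE h2 k) = 0 := by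
  simp [verticalField, k.isLt.not_ge]

lemma verticalField_sub (P Q : Fin d → MvPolynomial (Fin 2) ℝ) (x : Fin d → ℝ) :
    verticalField h2 (P - Q) x = verticalField h2 P x - verticalField h2 Q x := by
  ext j
  by_cases hj : 2 ≤ (j : ℕ) <;> simp [verticalField, hj]

lemma fderiv_verticalField_apply_verticalField (P Q : Fin d → MvPolynomial (Fin 2) ℝ)
    (x y : Fin d → ℝ) :
    fderiv ℝ (verticalField h2 P) x (verticalField h2 Q y) = 0 := by
  ext j
  simp [fderiv_verticalField_apply, verticalField_castLE]

lemma fderiv_verticalField_apply_of_castLE (P : Fin d → MvPolynomial (Fin 2) ℝ) (i : Fin 2)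
    (x v : Fin d → ℝ) (hv : ∀ k, v (Fin.castLE h2 k) = if k = i then 1 else 0) :
    fderiv ℝ (verticalField h2 P) x v = verticalField h2 (fun j => pderiv i (P j)) x := by
  ext j
  simp [fderiv_verticalField_apply, verticalField, hv]

end VerticalField

section DriftField

variable {d : ℕ} (hd : 3 ≤ d) (σ : Fin 2 → Fin d → MvPolynomial (Fin 2) ℝ)

lemma driftField_castLE (i k : Fin 2) (x : Fin d → ℝ) :
    driftField d hd σ i x (Fin.castLE (Nat.le_of_succ_le hd) k) = if k = i then 1 else 0 := by
  simp [driftField, k.isLt.not_ge, Fin.ext_iff]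

lemma fderiv_driftField (i : Fin 2) (x : Fin d → ℝ) :
    fderiv ℝ (driftField d hd σ i) x = fderiv ℝ (verticalField (Nat.le_of_succ_le hd) (σ i)) x := by
  have hsplit : driftField d hd σ i =
      fun y => (fun j : Fin d => if (j : ℕ) = i then (1 : ℝ) else 0) +
        verticalField (Nat.le_of_succ_le hd) (σ i) y := by
    ext y j
    rfl
  rw [hsplit, fderiv_const_add]

lemma lieBracketVF_driftField_verticalField (i : Fin 2) (P : Fin d → MvPolynomial (Fin 2) ℝ) :
    lieBracketVF (driftField d hd σ i) (verticalField (Nat.le_of_succ_le hd) P) =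
      verticalField (Nat.le_of_succ_le hd) (fun j => pderiv i (P j)) := by
  ext x : 1
  rw [lieBracketVF, fderiv_driftField, fderiv_verticalField_apply_verticalField, sub_zero,
    fderiv_verticalField_apply_of_castLE _ _ i _ _ (driftField_castLE hd σ i · x)]

lemma lieBracketVF_driftField_zero_one :
    lieBracketVF (driftField d hd σ 0) (driftField d hd σ 1) =
      verticalField (Nat.le_of_succ_le hd) (fun j => pderiv 0 (σ 1 j) - pderiv 1 (σ 0 j)) := by
  ext x : 1
  rw [lieBracketVF, fderiv_driftField, fderiv_driftField,
    fderiv_verticalField_apply_of_castLE _ _ 0 _ _ (driftField_castLE hd σ 0 · x),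
    fderiv_verticalField_apply_of_castLE _ _ 1 _ _ (driftField_castLE hd σ 1 · x),
    ← verticalField_sub]
  rfl

end DriftField

lemma wordBracket_driftField_append_zero_one {d : ℕ} (hd : 3 ≤ d)
    (σ : Fin 2 → Fin d → MvPolynomial (Fin 2) ℝ) (l : List (Fin 2)) :
    wordBracket (driftField d hd σ) (l ++ [0, 1]) =
      verticalField (Nat.le_of_succ_le hd)
        (fun j => l.foldr (fun i q => pderiv i q) (pderiv 0 (σ 1 j) - pderiv 1 (σ 0 j))) := by
  induction l with
  | nil => exact lieBracketVF_driftField_zero_one hd σ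
  | cons i l ih =>
    rw [List.cons_append, wordBracket_cons_of_ne_nil _ _ (by simp), ih,
      lieBracketVF_driftField_verticalField]
    rfl

/-- key identity in the proof of Lemma 1.1: for any word
`I = (i₁, …, i_N) ∈ {1,2}^N` with `N ≥ 2`, `i_{N-1} = 1` and `i_N = 2` (in the zero-based
encoding: `I = l ++ [0, 1]`), the iterated bracket satisfies, for all `x ∈ ℝ^d`,
`V_I(x) = Σ_{j ≥ 3} (∂₁^{n₁(I)-1} ∂₂^{n₂(I)-1} ψ_j)(x₁,x₂) e_j`, where `n₁(I), n₂(I)` count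
the occurrences of `1` resp. `2` in `I` and `ψ = ∂₁σ₂ − ∂₂σ₁`. -/
theorem stmt7 (d : ℕ) (hd : 3 ≤ d)
    (σ : Fin 2 → Fin d → MvPolynomial (Fin 2) ℝ)
    (I : List (Fin 2))
    (hend : ∃ l : List (Fin 2), I = l ++ [(0 : Fin 2), (1 : Fin 2)]) :
    ∀ x : Fin d → ℝ,
      wordBracket (driftField d hd σ) I x = fun j : Fin d =>
        if 2 ≤ (j : ℕ) then
          MvPolynomial.eval (fun k : Fin 2 => x (Fin.castLE (by omega) k))
            ((fun p => pderiv (0 : Fin 2) p)^[I.count 0 - 1]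
              ((fun p => pderiv (1 : Fin 2) p)^[I.count 1 - 1]
                (pderiv (0 : Fin 2) (σ 1 j) - pderiv (1 : Fin 2) (σ 0 j))))
        else 0 := by
  obtain ⟨l, rfl⟩ := hend
  intro x
  have hcount (i : Fin 2) : (l ++ [0, 1]).count i - 1 = l.count i := by
    fin_cases i <;> simp
  rw [wordBracket_driftField_append_zero_one, hcount, hcount]
  simp only [foldr_pderiv_eq_iterate]
  rfl
end

section
/- Fix any point w = (w₁, w₂) ∈ ℝ². Then the following are equivalent: (a) for every x ∈ ℝ^d, the linear span of the set of vectors { V_I(x) : I a word over {1,2} of length ≥ 1 } equals ℝ^d (the parabolic Hörmander condition for the driftless system with driving fields V₁, V₂); (b) the (d−2) × K matrix Σ(w₁, w₂), whose columns are the vectors (∂₁^{l} ∂₂^{m} ψ)(w₁, w₂) ∈ ℝ^{d−2} indexed by the pairs (l, m) with l, m ≥ 0 and l + m ≤ n − 1, has full rank d − 2. -/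
open MvPolynomial

/-!
The brackets of the fields are explicit. Writing `Vᵢ = eᵢ + (0, σᵢ(x₁, x₂))`, one has
`[V₁, V₂] = (0, ψ)` and `[Vᵢ, (0, q(x₁, x₂))] = (0, ∂ᵢ q)`, so the brackets of length at least two
are, up to sign, exactly the vertical fields `(0, ∂₁ˡ ∂₂ᵐ ψ)`. Together with `V₁(x), V₂(x)` they
span `ℝ^d` iff the vectors `∂₁ˡ ∂₂ᵐ ψ(x₁, x₂)`, over all `l, m`, span `ℝ^{d-2}`. A linear form `λ`
annihilating all of them is a combination `λ ∘ ψ` whose full jet at `(x₁, x₂)` vanishes, hence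
`λ ∘ ψ = 0`; so the spanning condition says that the components of `ψ` are linearly independent,
whatever the point. Finally `deg σ ≤ n` kills the derivatives of `ψ` of order at least `n`.
-/

namespace MvPolynomial

section PDeriv

variable {σ R : Type*} [CommSemiring R]

theorem pderiv_comm (i j : σ) (p : MvPolynomial σ R) :
    pderiv i (pderiv j p) = pderiv j (pderiv i p) := by
  classical
  by_cases hij : i = j
  · rw [hij]
  ext e
  simp only [coeff_pderiv, Finsupp.add_apply, Finsupp.single_apply, hij, Ne.symm hij,
    if_false, add_zero, add_right_comm e]
  ring

theorem add_single_mem_support_of_mem_support_pderiv {i : σ} {p : MvPolynomial σ R}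
    {e : σ →₀ ℕ} (h : e ∈ (pderiv i p).support) : e + Finsupp.single i 1 ∈ p.support := by
  rw [mem_support_iff, coeff_pderiv] at h
  exact mem_support_iff.2 (left_ne_zero_of_mul h)

theorem totalDegree_pderiv_lt {i : σ} {p : MvPolynomial σ R} (h : pderiv i p ≠ 0) :
    (pderiv i p).totalDegree < p.totalDegree := by
  obtain ⟨e, he, hsup⟩ := Finset.exists_mem_eq_sup _ (support_nonempty.2 h) Finsupp.degree
  have hle : (e + Finsupp.single i 1).degree ≤ p.totalDegree :=
    le_totalDegree (add_single_mem_support_of_mem_support_pderiv he)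
  have hdeg : (pderiv i p).totalDegree = e.degree := hsup
  rw [map_add, Finsupp.degree_single] at hle
  omega

theorem eq_C_of_forall_pderiv_eq_zero [CharZero R] [IsDomain R] {p : MvPolynomial σ R}
    (h : ∀ i, pderiv i p = 0) : p = C (coeff 0 p) := by
  classical
  ext e
  rw [coeff_C]
  split_ifs with he
  · rw [he]
  obtain ⟨i, hi⟩ : ∃ i, e i ≠ 0 := by
    by_contra! h0
    exact he (Finsupp.ext h0).symm
  have hcoeff := coeff_pderiv (i := i) p (e - Finsupp.single i 1)
  rw [h i, coeff_zero, tsub_add_cancel_of_le (Finsupp.single_le_iff.2 (by omega))] at hcoeff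
  exact (mul_eq_zero.1 hcoeff.symm).resolve_right (by norm_cast)

end PDeriv

section EvalFDeriv

variable {𝕜 ι : Type*} [NontriviallyNormedField 𝕜] [Fintype ι]

noncomputable def fderivEval (p : MvPolynomial ι 𝕜) (y : ι → 𝕜) : (ι → 𝕜) →L[𝕜] 𝕜 :=
  ∑ i, eval y (pderiv i p) • ContinuousLinearMap.proj (R := 𝕜) (φ := fun _ : ι => 𝕜) i

@[simp]
theorem fderivEval_apply (p : MvPolynomial ι 𝕜) (y v : ι → 𝕜) :
    fderivEval p y v = ∑ i, eval y (pderiv i p) * v i := by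
  simp [fderivEval]

theorem hasFDerivAt_eval_s10 (p : MvPolynomial ι 𝕜) (y : ι → 𝕜) :
    HasFDerivAt (fun z => eval z p) (fderivEval p y) y := by
  classical
  induction p using MvPolynomial.induction_on with
  | C a =>
    simp only [eval_C]
    refine (hasFDerivAt_const a y).congr_fderiv ?_
    ext v; simp
  | add p q hp hq =>
    simp only [map_add]
    refine (hp.fun_add hq).congr_fderiv ?_
    ext v; simp [add_mul, Finset.sum_add_distrib]
  | mul_X p i hp =>
    simp only [map_mul, eval_X]
    refine (hp.fun_mul (ContinuousLinearMap.proj i).hasFDerivAt).congr_fderiv ?_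
    ext v
    simp [pderiv_X, Pi.single_apply, apply_ite (eval y), Finset.sum_add_distrib, add_mul,
      Finset.mul_sum, mul_assoc]

end EvalFDeriv

section Bivariate

variable {R : Type*} [CommSemiring R]

noncomputable def iterPDeriv (l m : ℕ) : Module.End R (MvPolynomial (Fin 2) R) :=
  (pderiv 0).toLinearMap ^ l * (pderiv 1).toLinearMap ^ m

theorem iterPDeriv_apply (l m : ℕ) (p : MvPolynomial (Fin 2) R) :
    iterPDeriv l m p = (fun q => pderiv 0 q)^[l] ((fun q => pderiv 1 q)^[m] p) := by
  simp only [iterPDeriv, Module.End.mul_apply, Module.End.pow_apply]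
  rfl

@[simp]
theorem iterPDeriv_zero_zero (p : MvPolynomial (Fin 2) R) : iterPDeriv 0 0 p = p := by
  simp [iterPDeriv]

theorem iterPDeriv_pderiv (i : Fin 2) (l m : ℕ) (p : MvPolynomial (Fin 2) R) :
    iterPDeriv l m (pderiv i p) = pderiv i (iterPDeriv l m p) := by
  have hcomm : ∀ j, Commute (pderiv i).toLinearMap (pderiv j).toLinearMap :=
    fun j => LinearMap.ext (pderiv_comm (R := R) i j)
  exact (LinearMap.congr_fun (((hcomm 0).pow_right l).mul_right ((hcomm 1).pow_right m)).eq p).symm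

theorem pderiv_zero_iterPDeriv (l m : ℕ) (p : MvPolynomial (Fin 2) R) :
    pderiv 0 (iterPDeriv l m p) = iterPDeriv (l + 1) m p := by
  simp only [iterPDeriv, pow_succ', mul_assoc, Module.End.mul_apply]
  rfl

theorem pderiv_one_iterPDeriv (l m : ℕ) (p : MvPolynomial (Fin 2) R) :
    pderiv 1 (iterPDeriv l m p) = iterPDeriv l (m + 1) p := by
  rw [← iterPDeriv_pderiv]
  simp only [iterPDeriv, pow_succ, Module.End.mul_apply]
  rfl

theorem totalDegree_iterPDeriv_add_le {l m : ℕ} {p : MvPolynomial (Fin 2) R}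
    (h : iterPDeriv l m p ≠ 0) : (iterPDeriv l m p).totalDegree + (l + m) ≤ p.totalDegree := by
  induction l with
  | zero =>
    induction m with
    | zero => simp
    | succ m ih =>
      rw [← pderiv_one_iterPDeriv] at h ⊢
      have := totalDegree_pderiv_lt h
      have := ih fun h0 => h (by rw [h0, map_zero])
      omega
  | succ l ih =>
    rw [← pderiv_zero_iterPDeriv] at h ⊢
    have := totalDegree_pderiv_lt h
    have := ih fun h0 => h (by rw [h0, map_zero])
    omega

theorem iterPDeriv_eq_zero_of_totalDegree_lt {l m : ℕ} {p : MvPolynomial (Fin 2) R}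
    (h : p.totalDegree < l + m) : iterPDeriv l m p = 0 := by
  by_contra h0
  have := totalDegree_iterPDeriv_add_le h0
  omega

noncomputable def jet (y : Fin 2 → R) : MvPolynomial (Fin 2) R →ₗ[R] (ℕ × ℕ → R) :=
  LinearMap.pi fun lm => (aeval y).toLinearMap ∘ₗ iterPDeriv lm.1 lm.2

@[simp]
theorem jet_apply (y : Fin 2 → R) (p : MvPolynomial (Fin 2) R) (lm : ℕ × ℕ) :
    jet y p lm = eval y (iterPDeriv lm.1 lm.2 p) := by
  simp [jet]

theorem eq_zero_of_jet_eq_zero [CharZero R] [IsDomain R] {y : Fin 2 → R}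
    {p : MvPolynomial (Fin 2) R} (h : jet y p = 0) : p = 0 := by
  induction hN : p.totalDegree using Nat.strong_induction_on generalizing p with
  | _ N ih =>
  have hder : ∀ i, pderiv i p = 0 := by
    intro i
    by_contra hi
    refine hi (ih _ (hN ▸ totalDegree_pderiv_lt hi) (p := pderiv i p) ?_ rfl)
    ext lm
    have := congr_fun h
    fin_cases i
    · simpa [iterPDeriv_pderiv, pderiv_zero_iterPDeriv] using this (lm.1 + 1, lm.2)
    · simpa [iterPDeriv_pderiv, pderiv_one_iterPDeriv] using this (lm.1, lm.2 + 1)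
  have h00 := congr_fun h (0, 0)
  rw [eq_C_of_forall_pderiv_eq_zero hder] at h00 ⊢
  simpa using h00

theorem ker_jet [CharZero R] [IsDomain R] (y : Fin 2 → R) :
    LinearMap.ker (jet (R := R) y) = ⊥ :=
  LinearMap.ker_eq_bot'.2 fun _ => eq_zero_of_jet_eq_zero

end Bivariate

end MvPolynomial

theorem span_range_rows_eq_top_iff_linearIndependent {ι α K : Type*} [Field K] [Fintype ι]
    (c : ι → α → K) :
    Submodule.span K (Set.range fun a i => c i a) = ⊤ ↔ LinearIndependent K c := by
  classical
  rw [Fintype.linearIndependent_iff]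
  constructor
  · intro hspan g hg i
    let f : (ι → K) →ₗ[K] K := ∑ j, g j • LinearMap.proj j
    have hker : Submodule.span K (Set.range fun a i => c i a) ≤ LinearMap.ker f := by
      rw [Submodule.span_le]
      rintro _ ⟨a, rfl⟩
      simpa [f, mul_comm] using congr_fun hg a
    have := hker (hspan ▸ Submodule.mem_top : Pi.single i 1 ∈ _)
    simpa [f, Pi.single_apply] using this
  · intro hli
    by_contra hne
    obtain ⟨f, hf0, hf⟩ :=
      Submodule.exists_dual_map_eq_bot_of_lt_top (lt_top_iff_ne_top.2 hne) inferInstance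
    have hg : ∀ j, f (fun k => if j = k then 1 else 0) = 0 := by
      refine hli _ (funext fun a => ?_)
      have hfa : f (fun i => c i a) = 0 := by
        have := Submodule.mem_map_of_mem (f := f)
          (Submodule.subset_span (R := K) (Set.mem_range_self (f := fun a i => c i a) a))
        rwa [hf, Submodule.mem_bot] at this
      rw [LinearMap.pi_apply_eq_sum_univ f] at hfa
      simpa [mul_comm] using hfa
    exact hf0 (LinearMap.ext fun x => by simp [LinearMap.pi_apply_eq_sum_univ f x, hg])

theorem span_range_jet_eq_top_iff {ι K : Type*} [Fintype ι] [Field K] [CharZero K]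
    (y : Fin 2 → K) (p : ι → MvPolynomial (Fin 2) K) :
    Submodule.span K (Set.range fun lm i => jet y (p i) lm) = ⊤ ↔ LinearIndependent K p :=
  (span_range_rows_eq_top_iff_linearIndependent fun i => jet y (p i)).trans
    ((jet y).linearIndependent_iff (ker_jet y))

section VectorFields

variable {d : ℕ}

def planarCoords (hd : 2 ≤ d) : (Fin d → ℝ) →L[ℝ] (Fin 2 → ℝ) :=
  ContinuousLinearMap.pi fun t => ContinuousLinearMap.proj (Fin.castLE hd t)

@[simp]
theorem planarCoords_apply (hd : 2 ≤ d) (x : Fin d → ℝ) (t : Fin 2) :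
    planarCoords hd x t = x (Fin.castLE hd t) := rfl

def vertIdx (j : Fin (d - 2)) : Fin d := ⟨j + 2, by omega⟩

noncomputable def vertEmb : (Fin (d - 2) → ℝ) →L[ℝ] (Fin d → ℝ) :=
  ContinuousLinearMap.pi fun k =>
    if h : 2 ≤ (k : ℕ) then ContinuousLinearMap.proj ⟨k - 2, by omega⟩ else 0

@[simp]
theorem vertEmb_apply_vertIdx (u : Fin (d - 2) → ℝ) (j : Fin (d - 2)) :
    vertEmb u (vertIdx j) = u j := by
  simp [vertEmb, vertIdx]

@[simp]
theorem vertEmb_apply_castLE (hd : 2 ≤ d) (u : Fin (d - 2) → ℝ) (t : Fin 2) :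
    vertEmb u (Fin.castLE hd t) = 0 := by
  simp [vertEmb, t.isLt.not_ge]

theorem exists_castLE_or_vertIdx (hd : 2 ≤ d) (k : Fin d) :
    (∃ t : Fin 2, Fin.castLE hd t = k) ∨ ∃ j : Fin (d - 2), vertIdx j = k := by
  by_cases hk : (k : ℕ) < 2
  · exact .inl ⟨⟨k, hk⟩, rfl⟩
  · exact .inr ⟨⟨k - 2, by omega⟩, Fin.ext (by simp [vertIdx]; omega)⟩

theorem eq_vertEmb_of_planarCoords_eq_zero (hd : 2 ≤ d) {v : Fin d → ℝ}
    (hv : planarCoords hd v = 0) : v = vertEmb fun j => v (vertIdx j) := by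
  funext k
  rcases exists_castLE_or_vertIdx hd k with ⟨t, rfl⟩ | ⟨j, rfl⟩
  · simpa using congr_fun hv t
  · simp

variable (hd : 2 ≤ d)

noncomputable def polyField (c : Fin d → ℝ) (q : Fin (d - 2) → MvPolynomial (Fin 2) ℝ)
    (x : Fin d → ℝ) : Fin d → ℝ :=
  c + vertEmb fun j => eval (planarCoords hd x) (q j)

theorem polyField_zero_apply (q : Fin (d - 2) → MvPolynomial (Fin 2) ℝ) (x : Fin d → ℝ) :
    polyField hd 0 q x = vertEmb fun k => eval (planarCoords hd x) (q k) :=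
  zero_add _

theorem planarCoords_polyField (c : Fin d → ℝ) (q : Fin (d - 2) → MvPolynomial (Fin 2) ℝ)
    (x : Fin d → ℝ) : planarCoords hd (polyField hd c q x) = planarCoords hd c := by
  ext t
  simp [polyField]

theorem hasFDerivAt_polyField (c : Fin d → ℝ) (q : Fin (d - 2) → MvPolynomial (Fin 2) ℝ)
    (x : Fin d → ℝ) :
    HasFDerivAt (polyField hd c q)
      (vertEmb ∘L (ContinuousLinearMap.pi fun j => fderivEval (q j) (planarCoords hd x)) ∘L
        planarCoords hd) x := by
  refine (vertEmb.hasFDerivAt.comp x ?_).const_add c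
  exact hasFDerivAt_pi.2 fun j =>
    (hasFDerivAt_eval_s10 (q j) (planarCoords hd x)).comp x (planarCoords hd).hasFDerivAt

theorem lieBracketVF_polyField (c₁ c₂ : Fin d → ℝ) (q₁ q₂ : Fin (d - 2) → MvPolynomial (Fin 2) ℝ) :
    lieBracketVF (polyField hd c₁ q₁) (polyField hd c₂ q₂) =
      polyField hd 0 fun j =>
        ∑ t, planarCoords hd c₁ t • pderiv t (q₂ j) -
          ∑ t, planarCoords hd c₂ t • pderiv t (q₁ j) := by
  funext x
  simp only [lieBracketVF, (hasFDerivAt_polyField hd _ _ x).fderiv, ContinuousLinearMap.comp_apply,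
    planarCoords_polyField]
  simp only [polyField, zero_add, ← map_sub]
  congr 1
  funext j
  simp [smul_eval, mul_comm]

end VectorFields

noncomputable def curl {R : Type*} [CommRing R] {d : ℕ}
    (σ : Fin 2 → Fin d → MvPolynomial (Fin 2) R) (j : Fin (d - 2)) : MvPolynomial (Fin 2) R :=
  pderiv 0 (σ 1 (vertIdx j)) - pderiv 1 (σ 0 (vertIdx j))

theorem iterPDeriv_curl_eq_zero {R : Type*} [CommRing R] {d n : ℕ}
    {σ : Fin 2 → Fin d → MvPolynomial (Fin 2) R} (hdeg : ∀ i j, (σ i j).totalDegree ≤ n)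
    {l m : ℕ} (hlm : n ≤ l + m) (k : Fin (d - 2)) : iterPDeriv l m (curl σ k) = 0 := by
  rw [curl, map_sub, iterPDeriv_pderiv, iterPDeriv_pderiv, pderiv_zero_iterPDeriv,
    pderiv_one_iterPDeriv, iterPDeriv_eq_zero_of_totalDegree_lt,
    iterPDeriv_eq_zero_of_totalDegree_lt, sub_zero] <;>
  linarith [hdeg 0 (vertIdx k), hdeg 1 (vertIdx k)]

theorem span_iterPDeriv_curl_eq_span_jet {d n : ℕ} {σ : Fin 2 → Fin d → MvPolynomial (Fin 2) ℝ}
    (hdeg : ∀ i j, (σ i j).totalDegree ≤ n) (w : Fin 2 → ℝ) :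
    Submodule.span ℝ
        {v | ∃ l m : ℕ, l + m ≤ n - 1 ∧ v = fun k => eval w (iterPDeriv l m (curl σ k))} =
      Submodule.span ℝ (Set.range fun lm k => jet w (curl σ k) lm) := by
  apply le_antisymm
  · refine Submodule.span_mono ?_
    rintro _ ⟨l, m, -, rfl⟩
    exact ⟨(l, m), by simp⟩
  · rw [Submodule.span_le]
    rintro _ ⟨⟨l, m⟩, rfl⟩
    by_cases hlm : l + m ≤ n - 1
    · exact Submodule.subset_span ⟨l, m, hlm, by simp⟩
    · have hzero : (fun k => jet w (curl σ k) (l, m)) = 0 := by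
        funext k
        simp [iterPDeriv_curl_eq_zero hdeg (by omega : n ≤ l + m)]
      simp only [SetLike.mem_coe, hzero, zero_mem]

theorem wordBracket_cons {d : ℕ} (V : Fin 2 → (Fin d → ℝ) → (Fin d → ℝ)) (i : Fin 2)
    {I : List (Fin 2)} (hI : I ≠ []) :
    wordBracket V (i :: I) = lieBracketVF (V i) (wordBracket V I) := by
  cases I with
  | nil => exact absurd rfl hI
  | cons j I => rfl

section DriftFields

variable {d : ℕ} (hd : 3 ≤ d) (σ : Fin 2 → Fin d → MvPolynomial (Fin 2) ℝ)

local notation "hd₂" => Nat.le_of_succ_le hd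

theorem driftField_eq_polyField (i : Fin 2) :
    driftField d hd σ i =
      polyField hd₂ (fun k => if (k : ℕ) = i then 1 else 0) fun j => σ i (vertIdx j) := by
  funext x k
  rcases exists_castLE_or_vertIdx hd₂ k with ⟨t, rfl⟩ | ⟨j, rfl⟩
  · simp [driftField, polyField, t.isLt.not_ge]
  · simp [driftField, polyField, vertIdx]
    rfl

theorem planarCoords_driftField (i : Fin 2) (x : Fin d → ℝ) :
    planarCoords hd₂ (driftField d hd σ i x) = Pi.single i 1 := by
  ext t
  rw [driftField_eq_polyField, planarCoords_polyField]
  simp [Pi.single_apply, Fin.ext_iff]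

theorem lieBracketVF_driftField_driftField (i j : Fin 2) :
    lieBracketVF (driftField d hd σ i) (driftField d hd σ j) =
      polyField hd₂ 0 fun k => pderiv i (σ j (vertIdx k)) - pderiv j (σ i (vertIdx k)) := by
  simp only [driftField_eq_polyField, lieBracketVF_polyField]
  congr 2
  funext k
  fin_cases i <;> fin_cases j <;> simp

theorem lieBracketVF_driftField_polyField (i : Fin 2) (q : Fin (d - 2) → MvPolynomial (Fin 2) ℝ) :
    lieBracketVF (driftField d hd σ i) (polyField hd₂ 0 q) =
      polyField hd₂ 0 fun k => pderiv i (q k) := by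
  simp only [driftField_eq_polyField, lieBracketVF_polyField]
  congr 2
  funext k
  fin_cases i <;> simp

theorem exists_wordBracket_eq_smul_iterPDeriv_curl :
    ∀ I : List (Fin 2), 2 ≤ I.length → ∃ (l m : ℕ) (e : ℝ),
      wordBracket (driftField d hd σ) I = polyField hd₂ 0 fun k => e • iterPDeriv l m (curl σ k)
  | [i, j], _ => by
    refine ⟨0, 0, ?_⟩
    rw [show wordBracket (driftField d hd σ) [i, j] = _ from
      lieBracketVF_driftField_driftField hd σ i j]
    fin_cases i <;> fin_cases j
    exacts [⟨0, by simp⟩, ⟨1, by simp [curl]⟩, ⟨-1, by simp [curl]⟩, ⟨0, by simp⟩]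
  | i :: j :: k :: I, _ => by
    obtain ⟨l, m, e, h⟩ := exists_wordBracket_eq_smul_iterPDeriv_curl (j :: k :: I) (by simp)
    rw [wordBracket_cons _ _ (List.cons_ne_nil _ _), h, lieBracketVF_driftField_polyField]
    fin_cases i
    · exact ⟨l + 1, m, e, by simp [pderiv_zero_iterPDeriv]⟩
    · exact ⟨l, m + 1, e, by simp [pderiv_one_iterPDeriv]⟩

theorem exists_wordBracket_eq_iterPDeriv_curl (l m : ℕ) :
    ∃ I : List (Fin 2), I ≠ [] ∧
      wordBracket (driftField d hd σ) I = polyField hd₂ 0 fun k => iterPDeriv l m (curl σ k) := by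
  induction l with
  | zero =>
    induction m with
    | zero =>
      exact ⟨[0, 1], by simp, (lieBracketVF_driftField_driftField hd σ 0 1).trans (by simp [curl])⟩
    | succ m ih =>
      obtain ⟨I, hI, h⟩ := ih
      refine ⟨1 :: I, List.cons_ne_nil _ _, ?_⟩
      rw [wordBracket_cons _ _ hI, h, lieBracketVF_driftField_polyField]
      simp [pderiv_one_iterPDeriv]
  | succ l ih =>
    obtain ⟨I, hI, h⟩ := ih
    refine ⟨0 :: I, List.cons_ne_nil _ _, ?_⟩
    rw [wordBracket_cons _ _ hI, h, lieBracketVF_driftField_polyField]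
    simp [pderiv_zero_iterPDeriv]

-- The projection of `ℝ^d = span {V₁(x), V₂(x)} ⊕ (0 × ℝ^{d-2})` onto the second summand.
noncomputable def verticalPart (x : Fin d → ℝ) : (Fin d → ℝ) →ₗ[ℝ] (Fin (d - 2) → ℝ) :=
  LinearMap.funLeft ℝ ℝ vertIdx ∘ₗ (LinearMap.id -
    ∑ t : Fin 2, (LinearMap.proj (Fin.castLE hd₂ t)).smulRight (driftField d hd σ t x))

theorem driftField_apply_castLE (i t : Fin 2) (x : Fin d → ℝ) :
    driftField d hd σ i x (Fin.castLE hd₂ t) = (Pi.single i 1 : Fin 2 → ℝ) t :=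
  congr_fun (planarCoords_driftField hd σ i x) t

theorem verticalPart_vertEmb (x : Fin d → ℝ) (u : Fin (d - 2) → ℝ) :
    verticalPart hd σ x (vertEmb u) = u := by
  funext j
  simp [verticalPart, LinearMap.funLeft]

theorem verticalPart_driftField (x : Fin d → ℝ) (i : Fin 2) :
    verticalPart hd σ x (driftField d hd σ i x) = 0 := by
  funext j
  fin_cases i <;> simp [verticalPart, LinearMap.funLeft, driftField_apply_castLE, Fin.sum_univ_two]

theorem eq_sum_driftField_add_vertEmb (x v : Fin d → ℝ) :
    v = ∑ t : Fin 2, v (Fin.castLE hd₂ t) • driftField d hd σ t x +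
      vertEmb (verticalPart hd σ x v) := by
  have hw :
      planarCoords hd₂ (v - ∑ t : Fin 2, v (Fin.castLE hd₂ t) • driftField d hd σ t x) = 0 := by
    ext s
    fin_cases s <;> simp [driftField_apply_castLE, Fin.sum_univ_two]
  rw [← sub_eq_iff_eq_add', eq_vertEmb_of_planarCoords_eq_zero hd₂ hw]
  rfl

theorem verticalPart_wordBracket_mem_span (x : Fin d → ℝ) :
    ∀ I : List (Fin 2), I ≠ [] → verticalPart hd σ x (wordBracket (driftField d hd σ) I x) ∈
      Submodule.span ℝ (Set.range fun lm k => jet (planarCoords hd₂ x) (curl σ k) lm)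
  | [i], _ => by
    show verticalPart hd σ x (driftField d hd σ i x) ∈ _
    rw [verticalPart_driftField]
    exact zero_mem _
  | i :: j :: I, _ => by
    obtain ⟨l, m, e, h⟩ := exists_wordBracket_eq_smul_iterPDeriv_curl hd σ (i :: j :: I) (by simp)
    rw [h, polyField_zero_apply, verticalPart_vertEmb]
    convert Submodule.smul_mem _ e (Submodule.subset_span (Set.mem_range_self (l, m))) using 1
    funext k
    simp [smul_eval]

theorem span_wordBracket_eq_top_iff (x : Fin d → ℝ) :
    Submodule.span ℝ
        {v | ∃ I : List (Fin 2), I ≠ [] ∧ v = wordBracket (driftField d hd σ) I x} = ⊤ ↔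
      Submodule.span ℝ
        (Set.range fun lm k => jet (planarCoords hd₂ x) (curl σ k) lm) = ⊤ := by
  constructor
  · intro hS
    rw [eq_top_iff]
    rintro u -
    rw [← verticalPart_vertEmb hd σ x u]
    refine (Submodule.map_span_le _ _ _).2 ?_ (Submodule.mem_map_of_mem (hS ▸ Submodule.mem_top))
    rintro _ ⟨I, hI, rfl⟩
    exact verticalPart_wordBracket_mem_span hd σ x I hI
  · intro hT
    rw [Submodule.eq_top_iff']
    intro v
    rw [eq_sum_driftField_add_vertEmb hd σ x v]
    refine add_mem (Submodule.sum_mem _ fun t _ =>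
      Submodule.smul_mem _ _ (Submodule.subset_span ⟨[t], List.cons_ne_nil _ _, rfl⟩)) ?_
    refine (Submodule.map_span_le _ _ _).2 ?_ (Submodule.mem_map_of_mem (hT ▸ Submodule.mem_top))
    rintro _ ⟨⟨l, m⟩, rfl⟩
    obtain ⟨I, hI, h⟩ := exists_wordBracket_eq_iterPDeriv_curl hd σ l m
    refine Submodule.subset_span ⟨I, hI, ?_⟩
    rw [h, polyField_zero_apply]
    rfl

end DriftFields

/-- Lemma 1.1: for a fixed point `w ∈ ℝ²`, the parabolic Hörmander
condition for the driftless system — the iterated Lie brackets `V_I(x)` over all nonempty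
words `I` span `ℝ^d` at every `x` — holds if and only if the `(d-2) × K` matrix
`Σ(w)` with columns `(∂₁^l ∂₂^m ψ)(w)`, indexed by the pairs `(l,m)` with
`l + m ≤ n - 1`, has full rank `d - 2` (i.e. its columns span `ℝ^{d-2}`), where
`ψ = ∂₁σ₂ − ∂₂σ₁`. -/
theorem stmt10 (d n : ℕ) (hd : 3 ≤ d)
    (σ : Fin 2 → Fin d → MvPolynomial (Fin 2) ℝ)
    (hdeg : ∀ i j, (σ i j).totalDegree ≤ n)
    (w : Fin 2 → ℝ) :
    (∀ x : Fin d → ℝ,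
        Submodule.span ℝ
          {v : Fin d → ℝ |
            ∃ I : List (Fin 2), I ≠ [] ∧ v = wordBracket (driftField d hd σ) I x} = ⊤) ↔
      Submodule.span ℝ
        {v : Fin (d - 2) → ℝ |
          ∃ l m : ℕ, l + m ≤ n - 1 ∧
            v = fun j : Fin (d - 2) =>
              MvPolynomial.eval w
                ((fun p => pderiv (0 : Fin 2) p)^[l]
                  ((fun p => pderiv (1 : Fin 2) p)^[m]
                    (pderiv (0 : Fin 2) (σ 1 ⟨(j : ℕ) + 2, by have := j.isLt; omega⟩) -
                      pderiv (1 : Fin 2) (σ 0 ⟨(j : ℕ) + 2, by have := j.isLt; omega⟩))))} =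
        ⊤ := by
  simp only [← iterPDeriv_apply]
  change _ ↔ Submodule.span ℝ {v | ∃ l m : ℕ, l + m ≤ n - 1 ∧
    v = fun k => eval w (iterPDeriv l m (curl σ k))} = ⊤
  simp only [span_iterPDeriv_curl_eq_span_jet hdeg, span_wordBracket_eq_top_iff,
    span_range_jet_eq_top_iff]
  exact ⟨fun h => h 0, fun h _ => h⟩
end
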